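/- arXiv:math/0504472 — 5 statements merged into one kernel-verified Lean document; each statement's English description precedes it below -/
import Mathlib

section
/- Szemerédi regularity lemma (probabilistic version): Let ε > 0, m ≥ 0, let F : ℝ⁺ → ℝ⁺ be a monotone increasing function, and let I be a finite index set. Then there exists a real number M₀ = M₀(ε, F, m) with the following property. For every probability space (Ω, B_max, P), every collection (B_{i,max})_{i∈I} of sub-σ-algebras of B_max, and every random variable X ∈ L²(B_max) with ‖X‖_{L²} ≤ 1, there exist finite sub-σ-algebras B_i ⊆ B'_i ⊆ B_{i,max} for each i ∈ I and a real number M with m ≤ M ≤ M₀ such that: (complexity bound) complex(B_i) ≤ M for all i ∈ I; (coarse and fine approximations are close) ‖E(X | ⋁_{i∈I} B'_i) − E(X | ⋁_{i∈I} B_i)‖_{L²} ≤ ε; and (fine approximation is extremely accurate) for every collection of events (A_i)_{i∈I} with A_i ∈ B_{i,max} for all i ∈ I, |E( (X − E(X | ⋁_{i∈I} B'_i)) · ∏_{i∈I} 1_{A_i} )| ≤ 1/F(M). -/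
open MeasureTheory

/-- The complexity of a σ-algebra: the least number of sets needed to generate it. -/
noncomputable def complexity {Ω : Type*} (m : MeasurableSpace Ω) : ℕ :=
  sInf {n : ℕ | ∃ S : Finset (Set Ω), S.card = n ∧ MeasurableSpace.generateFrom (↑S) = m}

/-!
The energy `‖E(X | B)‖₂²` lies in `[0, 1]`, and for `B ≤ B'` the squared `L²` distance between
`E(X | B')` and `E(X | B)` is the energy difference (Pythagoras). Along a fast-growing sequence of
complexity levels `N j`, the supremal energy of families with at most `N j` generators per index
cannot rise by `ε² / 2` more than `2 / ε²` times, so some level `N j` is almost saturated: take a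
near-optimal coarse family there. Refine it by near-maximising the energy minus `δ² / 2` times the
complexity; then adding one more generator per index gains less than `δ²` energy. A product of
indicators of `A i ∈ B_{i,max}` is the indicator of `⋂ i, A i`, which is measurable after adding
`A i` to the `i`-th generators, so by Cauchy–Schwarz its correlation with `X - E(X | B')` is at most
`δ = 1 / F M`.
-/

open MeasurableSpace
open scoped RealInnerProductSpace

namespace Submodule

variable {E : Type*} [NormedAddCommGroup E] [InnerProductSpace ℝ E] {U V : Submodule ℝ E}
  [U.HasOrthogonalProjection] [V.HasOrthogonalProjection]

theorem norm_starProjection_sub_starProjection_sq (h : U ≤ V) (x : E) :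
    ‖V.starProjection x - U.starProjection x‖ ^ 2 =
      ‖V.starProjection x‖ ^ 2 - ‖U.starProjection x‖ ^ 2 := by
  have hUV : U.starProjection x ∈ V := h (U.starProjection_apply_mem x)
  have horth : ⟪U.starProjection x, V.starProjection x - U.starProjection x⟫ = 0 := by
    rw [← sub_sub_sub_cancel_left _ _ x, inner_sub_right, real_inner_comm,
      U.starProjection_inner_eq_zero x _ (U.starProjection_apply_mem x), real_inner_comm,
      V.starProjection_inner_eq_zero x _ hUV, sub_zero]
  have := norm_add_sq_eq_norm_sq_add_norm_sq_real horth
  rw [add_sub_cancel] at this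
  linarith

theorem abs_inner_sub_starProjection_le (x : E) {g : E} (hg : g ∈ V) :
    |⟪x - U.starProjection x, g⟫| ≤ ‖V.starProjection x - U.starProjection x‖ * ‖g‖ := by
  rw [← sub_add_sub_cancel x (V.starProjection x), inner_add_left,
    V.starProjection_inner_eq_zero x g hg, zero_add]
  exact abs_real_inner_le_norm _ _

end Submodule

namespace MeasureTheory

variable {Ω : Type*} {m m₁ m₂ m0 : MeasurableSpace Ω} {μ : Measure Ω} {X : Ω → ℝ}

theorem lpMeas_mono {F 𝕜 : Type*} [RCLike 𝕜] [NormedAddCommGroup F] [NormedSpace 𝕜 F]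
    {p : ENNReal} (h : m₁ ≤ m₂) : lpMeas F 𝕜 m₁ p μ ≤ lpMeas F 𝕜 m₂ p μ := fun _ hf => by
  rw [mem_lpMeas_iff_aestronglyMeasurable] at hf ⊢
  exact hf.mono h

noncomputable def condExpEnergy (μ : Measure Ω) (X : Ω → ℝ) (m : MeasurableSpace Ω) : ℝ :=
  (eLpNorm (μ[X|m]) 2 μ).toReal ^ 2

theorem condExpEnergy_nonneg : 0 ≤ condExpEnergy μ X m := sq_nonneg _

theorem condExpEnergy_le_one (hX : eLpNorm X 2 μ ≤ 1) : condExpEnergy μ X m ≤ 1 :=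
  pow_le_one₀ ENNReal.toReal_nonneg <| ENNReal.toReal_le_of_le_ofReal zero_le_one <| by
    simpa using (eLpNorm_condExp_le_eLpNorm X one_le_two).trans hX

section FiniteMeasure

variable [IsFiniteMeasure μ]

theorem MemLp.starProjection_lpMeas_ae_eq_condExp [Fact (m ≤ m0)] (hX : MemLp X 2 μ) :
    (lpMeas ℝ ℝ m 2 μ).starProjection (hX.toLp X) =ᵐ[μ] μ[X|m] :=
  hX.condExpL2_ae_eq_condExp (𝕜 := ℝ) Fact.out

theorem MemLp.condExpEnergy_eq_norm_sq [Fact (m ≤ m0)] (hX : MemLp X 2 μ) :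
    condExpEnergy μ X m = ‖(lpMeas ℝ ℝ m 2 μ).starProjection (hX.toLp X)‖ ^ 2 := by
  rw [condExpEnergy, Lp.norm_def, eLpNorm_congr_ae hX.starProjection_lpMeas_ae_eq_condExp]

theorem eLpNorm_condExp_sub_condExp (h₁₂ : m₁ ≤ m₂) (h₂ : m₂ ≤ m0) (hX : MemLp X 2 μ) :
    eLpNorm (μ[X|m₂] - μ[X|m₁]) 2 μ =
      ENNReal.ofReal √(condExpEnergy μ X m₂ - condExpEnergy μ X m₁) := by
  have : Fact (m₂ ≤ m0) := ⟨h₂⟩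
  have : Fact (m₁ ≤ m0) := ⟨h₁₂.trans h₂⟩
  have hmono : lpMeas ℝ ℝ m₁ 2 μ ≤ lpMeas ℝ ℝ m₂ 2 μ := lpMeas_mono h₁₂
  have hdiff : μ[X|m₂] - μ[X|m₁] =ᵐ[μ] ((lpMeas ℝ ℝ m₂ 2 μ).starProjection (hX.toLp X) -
      (lpMeas ℝ ℝ m₁ 2 μ).starProjection (hX.toLp X) : Ω →₂[μ] ℝ) := by
    filter_upwards [hX.starProjection_lpMeas_ae_eq_condExp (m := m₂),
      hX.starProjection_lpMeas_ae_eq_condExp (m := m₁), Lp.coeFn_sub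
        ((lpMeas ℝ ℝ m₂ 2 μ).starProjection (hX.toLp X))
        ((lpMeas ℝ ℝ m₁ 2 μ).starProjection (hX.toLp X))] with ω h₂ω h₁ω hω
    rw [hω, Pi.sub_apply, Pi.sub_apply, h₂ω, h₁ω]
  rw [eLpNorm_congr_ae hdiff, ← Lp.enorm_def, ← ofReal_norm, hX.condExpEnergy_eq_norm_sq,
    hX.condExpEnergy_eq_norm_sq, ← Submodule.norm_starProjection_sub_starProjection_sq hmono,
    Real.sqrt_sq (norm_nonneg _)]

end FiniteMeasure

theorem abs_integral_sub_condExp_mul_indicator_le [IsProbabilityMeasure μ] (h₁₂ : m₁ ≤ m₂)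
    (h₂ : m₂ ≤ m0) (hX : MemLp X 2 μ) {T : Set Ω} (hT : MeasurableSet[m₂] T) :
    |∫ ω, (X ω - μ[X|m₁] ω) * T.indicator 1 ω ∂μ| ≤
      √(condExpEnergy μ X m₂ - condExpEnergy μ X m₁) := by
  have : Fact (m₂ ≤ m0) := ⟨h₂⟩
  have : Fact (m₁ ≤ m0) := ⟨h₁₂.trans h₂⟩
  have hmono : lpMeas ℝ ℝ m₁ 2 μ ≤ lpMeas ℝ ℝ m₂ 2 μ := lpMeas_mono h₁₂
  set g := indicatorConstLp 2 (h₂ T hT) (measure_ne_top μ T) (1 : ℝ)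
  have hg : g ∈ lpMeas ℝ ℝ m₂ 2 μ := mem_lpMeas_indicatorConstLp h₂ hT _
  have hg_norm : ‖g‖ ≤ 1 := by
    rw [norm_indicatorConstLp two_ne_zero ENNReal.ofNat_ne_top, norm_one, one_mul]
    exact Real.rpow_le_one ENNReal.toReal_nonneg (by simp) (by norm_num)
  have hinner : ∫ ω, (X ω - μ[X|m₁] ω) * T.indicator 1 ω ∂μ =
      ⟪hX.toLp X - (lpMeas ℝ ℝ m₁ 2 μ).starProjection (hX.toLp X), g⟫ := by
    rw [real_inner_comm, L2.inner_indicatorConstLp_one, ← integral_indicator (h₂ T hT)]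
    refine integral_congr_ae ?_
    filter_upwards [hX.coeFn_toLp, hX.starProjection_lpMeas_ae_eq_condExp (m := m₁),
      Lp.coeFn_sub (hX.toLp X) ((lpMeas ℝ ℝ m₁ 2 μ).starProjection (hX.toLp X))]
      with ω hxω h₁ω hω
    by_cases hωT : ω ∈ T
    · simp only [Set.indicator_of_mem hωT, hω, Pi.sub_apply, hxω, h₁ω, Pi.one_apply, mul_one]
    · simp only [Set.indicator_of_notMem hωT, mul_zero]
  rw [hinner, hX.condExpEnergy_eq_norm_sq, hX.condExpEnergy_eq_norm_sq,
    ← Submodule.norm_starProjection_sub_starProjection_sq hmono, Real.sqrt_sq (norm_nonneg _)]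
  exact (Submodule.abs_inner_sub_starProjection_le _ hg).trans
    (mul_le_of_le_one_right (norm_nonneg _) hg_norm)

end MeasureTheory

theorem exists_lt_succ_le_add_of_lt_mul {u : ℕ → ℝ} {J : ℕ} {c : ℝ} (h0 : 0 ≤ u 0)
    (hJ : u J ≤ 1) (hc : 1 < J * c) : ∃ j < J, u (j + 1) ≤ u j + c := by
  by_contra! h
  have hgrowth : ∀ k ≤ J, u 0 + k * c ≤ u k := by
    intro k
    induction k with
    | zero => simp
    | succ k ih =>
      intro hk
      push_cast
      linarith [ih (by omega), h k (by omega)]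
  linarith [hgrowth J le_rfl]

section AbstractRegularity

variable {β : Type*} [Preorder β] (size : β → ℕ) (Φ : β → ℝ)

def IsSaturated (η : ℝ) (b : β) : Prop :=
  ∀ c, b ≤ c → size c ≤ size b + 1 → Φ c ≤ Φ b + η

theorem exists_le_isSaturated (hΦ0 : ∀ b, 0 ≤ Φ b) (hΦ1 : ∀ b, Φ b ≤ 1) {δ : ℝ} (hδ : 0 < δ)
    (b : β) : ∃ b', b ≤ b' ∧ size b' ≤ size b + ⌈2 / δ ^ 2⌉₊ ∧ IsSaturated size Φ (δ ^ 2) b' := by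
  set penalized : β → ℝ := fun c => Φ c - δ ^ 2 / 2 * size c
  have hbdd : BddAbove (penalized '' Set.Ici b) := by
    refine ⟨1, ?_⟩
    rintro _ ⟨c, -, rfl⟩
    have : 0 ≤ δ ^ 2 / 2 * size c := by positivity
    linarith [hΦ1 c, show penalized c = Φ c - δ ^ 2 / 2 * size c from rfl]
  obtain ⟨_, ⟨b', hbb', rfl⟩, hb'⟩ := exists_lt_of_lt_csSup (Set.nonempty_Ici.image _)
    (sub_lt_self (sSup (penalized '' Set.Ici b)) (by positivity : 0 < δ ^ 2 / 2))
  have hle : ∀ c, b ≤ c → penalized c ≤ sSup (penalized '' Set.Ici b) :=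
    fun c hc => le_csSup hbdd ⟨c, hc, rfl⟩
  refine ⟨b', hbb', ?_, fun c hc hsize => ?_⟩
  · have hpen := hle b le_rfl
    simp only [penalized] at hpen hb'
    have hlt : (size b' : ℝ) < size b + 2 / δ ^ 2 + 1 := by
      have : δ ^ 2 / 2 * (2 / δ ^ 2) = 1 := by field_simp
      refine lt_of_mul_lt_mul_left (a := δ ^ 2 / 2) ?_ (by positivity)
      nlinarith [hΦ0 b, hΦ1 b']
    have : (size b' : ℝ) < size b + ⌈2 / δ ^ 2⌉₊ + 1 :=
      hlt.trans_le (by gcongr; exact Nat.le_ceil _)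
    exact Nat.lt_succ_iff.1 (by exact_mod_cast this)
  · have hpen := hle c (hbb'.trans hc)
    have hsize' : δ ^ 2 / 2 * (size c : ℝ) ≤ δ ^ 2 / 2 * (size b' + 1) := by
      gcongr
      exact_mod_cast hsize
    simp only [penalized] at hpen hb'
    linarith

/-- Leaves room for the saturating refinement (`exists_le_isSaturated`) of a family at level
`regularityBound δ j`. -/
noncomputable def regularityBound (δ : ℕ → ℝ) : ℕ → ℕ
  | 0 => 0
  | j + 1 => regularityBound δ j + ⌈2 / δ (regularityBound δ j) ^ 2⌉₊

theorem monotone_regularityBound (δ : ℕ → ℝ) : Monotone (regularityBound δ) :=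
  monotone_nat_of_le_succ fun _ => Nat.le_add_right _ _

theorem exists_regular_pair (hΦ0 : ∀ b, 0 ≤ Φ b) (hΦ1 : ∀ b, Φ b ≤ 1) (b₀ : β)
    (hb₀ : size b₀ = 0) {ε : ℝ} (hε : 0 < ε) {δ : ℕ → ℝ} (hδ : ∀ n, 0 < δ n) :
    ∃ j ≤ ⌊2 / ε ^ 2⌋₊, ∃ b b', b ≤ b' ∧ size b ≤ regularityBound δ j ∧
      size b' ≤ regularityBound δ (j + 1) ∧ Φ b' ≤ Φ b + ε ^ 2 ∧
      IsSaturated size Φ (δ (regularityBound δ j) ^ 2) b' := by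
  set N := regularityBound δ
  set level : ℕ → Set ℝ := fun n => Φ '' {b | size b ≤ n}
  have hlevel_ne : ∀ n, (level n).Nonempty := fun n => ⟨Φ b₀, b₀, by simp [hb₀], rfl⟩
  have hlevel_bdd : ∀ n, BddAbove (level n) :=
    fun n => ⟨1, by rintro _ ⟨b, -, rfl⟩; exact hΦ1 b⟩
  have hstart : 0 ≤ sSup (level (N 0)) :=
    (hΦ0 b₀).trans (le_csSup (hlevel_bdd _) ⟨b₀, by simp [hb₀, N, regularityBound], rfl⟩)
  have hend : sSup (level (N (⌊2 / ε ^ 2⌋₊ + 1))) ≤ 1 :=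
    csSup_le (hlevel_ne _) (by rintro _ ⟨b, -, rfl⟩; exact hΦ1 b)
  have hsteps : 1 < ((⌊2 / ε ^ 2⌋₊ + 1 : ℕ) : ℝ) * (ε ^ 2 / 2) :=
    calc (1 : ℝ) = 2 / ε ^ 2 * (ε ^ 2 / 2) := by field_simp
      _ < _ := by
        push_cast
        exact mul_lt_mul_of_pos_right (Nat.lt_floor_add_one _) (by positivity)
  obtain ⟨j, hj, hgap⟩ :=
    exists_lt_succ_le_add_of_lt_mul (u := fun j => sSup (level (N j))) hstart hend hsteps
  obtain ⟨_, ⟨b, hb, rfl⟩, hbΦ⟩ := exists_lt_of_lt_csSup (hlevel_ne (N j))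
    (sub_lt_self _ (by positivity : 0 < ε ^ 2 / 2))
  obtain ⟨b', hbb', hb'size, hb'⟩ := exists_le_isSaturated size Φ hΦ0 hΦ1 (hδ (N j)) b
  have hb'N : size b' ≤ N (j + 1) := hb'size.trans (Nat.add_le_add_right hb _)
  refine ⟨j, Nat.lt_succ_iff.1 hj, b, b', hbb', hb, hb'N, ?_, hb'⟩
  have := le_csSup (hlevel_bdd (N (j + 1))) ⟨b', hb'N, rfl⟩
  linarith

end AbstractRegularity

theorem MeasurableSpace.finite_measurableSet_generateFrom {Ω : Type*} {S : Set (Set Ω)}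
    (hS : S.Finite) : {s : Set Ω | MeasurableSet[generateFrom S] s}.Finite := by
  have : Finite S := hS
  -- every `generateFrom S`-measurable set is determined by which generators a point lies in
  let membership : Ω → (S → Prop) := fun ω s => ω ∈ (s : Set Ω)
  have hle : generateFrom S ≤ MeasurableSpace.comap membership ⊤ :=
    generateFrom_le fun t ht => ⟨{f | f ⟨t, ht⟩}, trivial, rfl⟩
  refine ((Set.finite_range fun G : Set (S → Prop) => membership ⁻¹' G).subset ?_).subset
    fun t ht => hle t ht
  rintro t ⟨G, -, rfl⟩
  exact ⟨G, rfl⟩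

theorem complexity_generateFrom_le_card {Ω : Type*} (S : Finset (Set Ω)) :
    complexity (generateFrom (S : Set (Set Ω))) ≤ S.card :=
  Nat.sInf_le ⟨S, rfl, rfl⟩

abbrev GeneratingFamily {I Ω : Type*} (Bmax : I → MeasurableSpace Ω) :=
  {S : I → Finset (Set Ω) // ∀ i, ∀ s ∈ S i, MeasurableSet[Bmax i] s}

namespace GeneratingFamily

variable {I Ω : Type*} {Bmax : I → MeasurableSpace Ω}

abbrev generate (S : GeneratingFamily Bmax) : MeasurableSpace Ω :=
  ⨆ i, generateFrom (S.1 i : Set (Set Ω))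

theorem generate_le {m0 : MeasurableSpace Ω} (hBmax : ∀ i, Bmax i ≤ m0)
    (S : GeneratingFamily Bmax) : S.generate ≤ m0 :=
  iSup_le fun i => (generateFrom_le (S.2 i)).trans (hBmax i)

theorem generate_mono : Monotone (generate (Bmax := Bmax)) := fun _ _ hST =>
  iSup_mono fun i => generateFrom_mono (Finset.coe_subset.2 (hST i))

section Insert

variable [DecidableEq (Set Ω)]

def insert (S : GeneratingFamily Bmax) (A : I → Set Ω)
    (hA : ∀ i, MeasurableSet[Bmax i] (A i)) : GeneratingFamily Bmax :=
  ⟨fun i => Insert.insert (A i) (S.1 i), fun i s hs => by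
    rcases Finset.mem_insert.1 hs with rfl | hs
    exacts [hA i, S.2 i s hs]⟩

variable (S : GeneratingFamily Bmax) {A : I → Set Ω} (hA : ∀ i, MeasurableSet[Bmax i] (A i))

theorem le_insert : S ≤ S.insert A hA := fun _ => Finset.subset_insert _ _

end Insert

variable [Fintype I]

def maxCard (S : GeneratingFamily Bmax) : ℕ :=
  Finset.univ.sup fun i => (S.1 i).card

theorem card_le_maxCard (S : GeneratingFamily Bmax) (i : I) : (S.1 i).card ≤ S.maxCard :=
  Finset.le_sup (f := fun i => (S.1 i).card) (Finset.mem_univ i)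

theorem maxCard_insert_le [DecidableEq (Set Ω)] (S : GeneratingFamily Bmax) {A : I → Set Ω}
    (hA : ∀ i, MeasurableSet[Bmax i] (A i)) : (S.insert A hA).maxCard ≤ S.maxCard + 1 :=
  Finset.sup_le fun i _ =>
    (Finset.card_insert_le _ _).trans (Nat.add_le_add_right (S.card_le_maxCard i) 1)

theorem measurableSet_iInter_generate_insert [DecidableEq (Set Ω)] (S : GeneratingFamily Bmax)
    {A : I → Set Ω} (hA : ∀ i, MeasurableSet[Bmax i] (A i)) :
    MeasurableSet[(S.insert A hA).generate] (⋂ i, A i) :=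
  MeasurableSet.iInter fun i =>
    le_iSup (fun j => generateFrom ((S.insert A hA).1 j : Set (Set Ω))) i (A i)
      (measurableSet_generateFrom (Finset.mem_insert_self (A i) (S.1 i)))

end GeneratingFamily

theorem szemeredi_regularity_probabilistic_general
    (ε : ℝ) (hε : 0 < ε) (m : ℝ)
    (F : ℝ → ℝ) (hFpos : ∀ x, 0 < F x)
    (I : Type) [Fintype I] :
    ∃ M₀ : ℝ,
      ∀ (Ω : Type) [mΩ : MeasurableSpace Ω] (μ : Measure Ω) [IsProbabilityMeasure μ]
        (Bmax : I → MeasurableSpace Ω), (∀ i, Bmax i ≤ mΩ) →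
        ∀ X : Ω → ℝ, MemLp X 2 μ → eLpNorm X 2 μ ≤ 1 →
        ∃ (B B' : I → MeasurableSpace Ω) (M : ℝ),
          -- B_i ⊆ B'_i ⊆ B_{i,max}, all finite σ-algebras
          (∀ i, B i ≤ B' i) ∧
          (∀ i, B' i ≤ Bmax i) ∧
          (∀ i, {s : Set Ω | MeasurableSet[B i] s}.Finite) ∧
          (∀ i, {s : Set Ω | MeasurableSet[B' i] s}.Finite) ∧
          -- size of M
          m ≤ M ∧ M ≤ M₀ ∧
          -- complexity bound
          (∀ i, (complexity (B i) : ℝ) ≤ M) ∧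
          -- coarse and fine approximations are close
          eLpNorm (μ[X| ⨆ i, B' i] - μ[X| ⨆ i, B i]) 2 μ ≤ ENNReal.ofReal ε ∧
          -- fine approximation is extremely accurate
          (∀ A : I → Set Ω, (∀ i, MeasurableSet[Bmax i] (A i)) →
            |∫ x, (X x - (μ[X| ⨆ i, B' i]) x) * ∏ i, (A i).indicator (1 : Ω → ℝ) x ∂μ|
              ≤ 1 / F M) := by
  classical
  set δ : ℕ → ℝ := fun n => 1 / F (max m n)
  refine ⟨max m (regularityBound δ ⌊2 / ε ^ 2⌋₊), fun Ω mΩ μ _ Bmax hBmax X hX hX1 => ?_⟩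
  obtain ⟨j, hj, S, S', hSS', hsize, -, hclose, hsaturated⟩ :=
    exists_regular_pair GeneratingFamily.maxCard (fun S => condExpEnergy μ X S.generate)
      (fun _ => condExpEnergy_nonneg) (fun _ => condExpEnergy_le_one hX1)
      (⟨fun _ => ∅, by simp⟩ : GeneratingFamily Bmax) (by simp [GeneratingFamily.maxCard]) hε
      (fun n => one_div_pos.2 (hFpos _))
  refine ⟨fun i => generateFrom (S.1 i), fun i => generateFrom (S'.1 i),
    max m (regularityBound δ j), fun i => generateFrom_mono (Finset.coe_subset.2 (hSS' i)),
    fun i => generateFrom_le (S'.2 i),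
    fun i => finite_measurableSet_generateFrom (S.1 i).finite_toSet,
    fun i => finite_measurableSet_generateFrom (S'.1 i).finite_toSet,
    le_max_left _ _, max_le_max le_rfl (by exact_mod_cast monotone_regularityBound δ hj),
    fun i => ?_, ?_, fun A hA => ?_⟩
  · exact (Nat.cast_le.2 ((complexity_generateFrom_le_card (S.1 i)).trans
      ((S.card_le_maxCard i).trans hsize))).trans (le_max_right _ _)
  · rw [eLpNorm_condExp_sub_condExp (GeneratingFamily.generate_mono hSS')
        (S'.generate_le hBmax) hX]
    exact ENNReal.ofReal_le_ofReal (Real.sqrt_le_iff.2 ⟨hε.le, by linarith⟩)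
  · have hgain := hsaturated _ (S'.le_insert hA) (S'.maxCard_insert_le hA)
    simp only [prod_indicator_const_apply, one_pow, Finset.mem_univ, Set.iInter_true]
    refine (abs_integral_sub_condExp_mul_indicator_le (GeneratingFamily.generate_mono
      (S'.le_insert hA)) ((S'.insert A hA).generate_le hBmax) hX
      (S'.measurableSet_iInter_generate_insert hA)).trans ?_
    exact Real.sqrt_le_iff.2 ⟨(one_div_pos.2 (hFpos _)).le, by linarith⟩

/-- Szemerédi regularity lemma, probabilistic version. -/
theorem szemeredi_regularity_probabilistic
    (ε : ℝ) (hε : 0 < ε) (m : ℝ) (hm : 0 ≤ m)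
    (F : ℝ → ℝ) (hF : Monotone F) (hFpos : ∀ x, 0 < F x)
    (I : Type) [Fintype I] :
    ∃ M₀ : ℝ,
      ∀ (Ω : Type) [mΩ : MeasurableSpace Ω] (μ : Measure Ω) [IsProbabilityMeasure μ]
        (Bmax : I → MeasurableSpace Ω), (∀ i, Bmax i ≤ mΩ) →
        ∀ X : Ω → ℝ, MemLp X 2 μ → eLpNorm X 2 μ ≤ 1 →
        ∃ (B B' : I → MeasurableSpace Ω) (M : ℝ),
          -- B_i ⊆ B'_i ⊆ B_{i,max}, all finite σ-algebras
          (∀ i, B i ≤ B' i) ∧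
          (∀ i, B' i ≤ Bmax i) ∧
          (∀ i, {s : Set Ω | MeasurableSet[B i] s}.Finite) ∧
          (∀ i, {s : Set Ω | MeasurableSet[B' i] s}.Finite) ∧
          -- size of M
          m ≤ M ∧ M ≤ M₀ ∧
          -- complexity bound
          (∀ i, (complexity (B i) : ℝ) ≤ M) ∧
          -- coarse and fine approximations are close
          eLpNorm (μ[X| ⨆ i, B' i] - μ[X| ⨆ i, B i]) 2 μ ≤ ENNReal.ofReal ε ∧
          -- fine approximation is extremely accurate
          (∀ A : I → Set Ω, (∀ i, MeasurableSet[Bmax i] (A i)) →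
            |∫ x, (X x - (μ[X| ⨆ i, B' i]) x) * ∏ i, (A i).indicator (1 : Ω → ℝ) x ∂μ|
              ≤ 1 / F M) :=
  szemeredi_regularity_probabilistic_general ε hε m F hFpos I
end

section
/- Lack of regularity implies energy increment: Let (Ω, B_max, P) be a probability space, I a finite index set, and X ∈ L²(B_max). Suppose for each i ∈ I we have a finite sub-σ-algebra B'_i ⊆ B_{i,max} ⊆ B_max and an event A_i ∈ B_{i,max}, and suppose that |E( (X − E(X | ⋁_{i∈I} B'_i)) · ∏_{i∈I} 1_{A_i} )| > δ for some δ > 0. Define B''_i := B'_i ∨ {∅, A_i, Ω \ A_i, Ω} (the σ-algebra generated by B'_i and A_i) for each i ∈ I. Then: (complexity increment) complex(B''_i) ≤ complex(B'_i) + 1 for all i ∈ I, and (energy increment) E(⋁_{i∈I} B''_i) ≥ E(⋁_{i∈I} B'_i) + δ². -/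
/-!
Conditioning on the finer σ-algebra `𝓑'' = ⋁ᵢ 𝓑''ᵢ` does not change the correlation of `X` with
the indicator of `⋂ᵢ Aᵢ`, which is `𝓑''`-measurable, so the irregularity is a correlation of the
increment `E(X | 𝓑'') - E(X | 𝓑')` with an indicator; by Cauchy–Schwarz its square is at most
`‖E(X | 𝓑'') - E(X | 𝓑')‖²`, and since `E(X | 𝓑')` is the orthogonal projection of `E(X | 𝓑'')`
this equals the energy increment `‖E(X | 𝓑'')‖² - ‖E(X | 𝓑')‖²`. The complexity bound comes from
adjoining `Aᵢ` to a minimal generating family of `𝓑'ᵢ`.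
-/

open MeasureTheory

section Complexity

variable {Ω : Type*} {m : MeasurableSpace Ω}

lemma complexity_le_card {S : Finset (Set Ω)} (hS : MeasurableSpace.generateFrom ↑S = m) :
    complexity m ≤ S.card :=
  Nat.sInf_le ⟨S, rfl, hS⟩

lemma exists_finset_card_eq_complexity (hm : {s : Set Ω | MeasurableSet[m] s}.Finite) :
    ∃ S : Finset (Set Ω), S.card = complexity m ∧ MeasurableSpace.generateFrom ↑S = m :=
  Nat.sInf_mem (s := {n | ∃ S : Finset (Set Ω), S.card = n ∧ MeasurableSpace.generateFrom ↑S = m})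
    ⟨_, hm.toFinset, rfl, by rw [hm.coe_toFinset, MeasurableSpace.generateFrom_measurableSet]⟩

lemma complexity_sup_generateFrom_singleton_le (hm : {s : Set Ω | MeasurableSet[m] s}.Finite)
    (s : Set Ω) : complexity (m ⊔ MeasurableSpace.generateFrom {s}) ≤ complexity m + 1 := by
  classical
  obtain ⟨S, hcard, hgen⟩ := exists_finset_card_eq_complexity hm
  calc complexity (m ⊔ MeasurableSpace.generateFrom {s})
      ≤ (insert s S).card := complexity_le_card <| by
        rw [Finset.coe_insert, Set.insert_eq, ← MeasurableSpace.generateFrom_sup_generateFrom,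
          hgen, sup_comm]
    _ ≤ complexity m + 1 := hcard ▸ Finset.card_insert_le s S

end Complexity

section Energy

variable {Ω : Type*} {m m₁ m₂ : MeasurableSpace Ω} [mΩ : MeasurableSpace Ω] {μ : Measure Ω}

lemma integral_mul_condExp_of_stronglyMeasurable (hm : m ≤ mΩ) [SigmaFinite (μ.trim hm)]
    {h Y : Ω → ℝ} (hh : StronglyMeasurable[m] h) (hhY : Integrable (h * Y) μ)
    (hY : Integrable Y μ) :
    ∫ x, h x * (μ[Y|m]) x ∂μ = ∫ x, h x * Y x ∂μ :=
  (integral_congr_ae (condExp_mul_of_stronglyMeasurable_left hh hhY hY)).symm.trans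
    (integral_condExp hm)

lemma integral_sq_condExp_sub_condExp [IsFiniteMeasure μ] (hm₁₂ : m₁ ≤ m₂) (hm₂ : m₂ ≤ mΩ)
    {X : Ω → ℝ} (hX : MemLp X 2 μ) :
    ∫ x, ((μ[X|m₂]) x - (μ[X|m₁]) x) ^ 2 ∂μ
      = ∫ x, ((μ[X|m₂]) x) ^ 2 ∂μ - ∫ x, ((μ[X|m₁]) x) ^ 2 ∂μ := by
  set f := μ[X|m₁]
  set g := μ[X|m₂]
  have hf : MemLp f 2 μ := hX.condExp one_le_two
  have hg : MemLp g 2 μ := hX.condExp one_le_two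
  have hfg : Integrable (f * g) μ := hf.integrable_mul hg
  have hcross : ∫ x, f x * g x ∂μ = ∫ x, f x ^ 2 ∂μ := by
    rw [← integral_mul_condExp_of_stronglyMeasurable (hm₁₂.trans hm₂) stronglyMeasurable_condExp
      hfg integrable_condExp]
    refine integral_congr_ae ?_
    filter_upwards [condExp_condExp_of_le (f := X) hm₁₂ hm₂] with x hx
    rw [hx, sq]
  calc ∫ x, (g x - f x) ^ 2 ∂μ
      = ∫ x, g x ^ 2 ∂μ - 2 * ∫ x, f x * g x ∂μ + ∫ x, f x ^ 2 ∂μ := by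
        have hfg' : Integrable (fun x => 2 * (f x * g x)) μ := hfg.const_mul 2
        have hsub : Integrable (fun x => g x ^ 2 - 2 * (f x * g x)) μ :=
          hg.integrable_sq.sub hfg'
        rw [← integral_const_mul, ← integral_sub hg.integrable_sq hfg',
          ← integral_add hsub hf.integrable_sq]
        exact integral_congr_ae (.of_forall fun x => by ring)
    _ = ∫ x, g x ^ 2 ∂μ - ∫ x, f x ^ 2 ∂μ := by rw [hcross]; ring

lemma sq_integral_mul_indicator_le [IsProbabilityMeasure μ] {u : Ω → ℝ} (hu : MemLp u 2 μ)
    {s : Set Ω} (hs : MeasurableSet s) :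
    (∫ x, u x * s.indicator 1 x ∂μ) ^ 2 ≤ ∫ x, u x ^ 2 ∂μ := by
  have hus : MemLp (s.indicator u) 2 μ := hu.indicator hs
  calc (∫ x, u x * s.indicator 1 x ∂μ) ^ 2 = (∫ x, s.indicator u x ∂μ) ^ 2 := by
        congr 1; refine integral_congr_ae (.of_forall fun x => ?_)
        by_cases hx : x ∈ s <;> simp [hx]
    _ ≤ ∫ x, (s.indicator u x) ^ 2 ∂μ := by
        have h := ProbabilityTheory.variance_nonneg (s.indicator u) μ
        rw [ProbabilityTheory.variance_eq_sub hus] at h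
        exact sub_nonneg.1 h
    _ ≤ ∫ x, u x ^ 2 ∂μ := by
        refine integral_mono hus.integrable_sq hu.integrable_sq fun x => ?_
        by_cases hx : x ∈ s <;> simp [hx, sq_nonneg]

lemma integral_sub_condExp_mul_indicator [IsFiniteMeasure μ] (hm₁₂ : m₁ ≤ m₂) (hm₂ : m₂ ≤ mΩ)
    {X : Ω → ℝ} (hX : Integrable X μ) {s : Set Ω} (hs : MeasurableSet[m₂] s) :
    ∫ x, (X x - (μ[X|m₁]) x) * s.indicator 1 x ∂μ
      = ∫ x, ((μ[X|m₂]) x - (μ[X|m₁]) x) * s.indicator 1 x ∂μ := by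
  have hind : StronglyMeasurable[m₂] (s.indicator (1 : Ω → ℝ)) :=
    stronglyMeasurable_const.indicator hs
  have hbound : ∀ᵐ x ∂μ, ‖s.indicator (1 : Ω → ℝ) x‖ ≤ 1 :=
    .of_forall fun x => by by_cases hx : x ∈ s <;> simp [hx]
  have hresid_int : Integrable (X - μ[X|m₁]) μ := hX.sub integrable_condExp
  have hresid : μ[X - μ[X|m₁] | m₂] =ᵐ[μ] μ[X|m₂] - μ[X|m₁] := by
    filter_upwards [condExp_sub hX integrable_condExp m₂] with x hx
    rw [hx, Pi.sub_apply, Pi.sub_apply,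
      condExp_of_stronglyMeasurable hm₂ (stronglyMeasurable_condExp.mono hm₁₂) integrable_condExp]
  calc ∫ x, (X x - (μ[X|m₁]) x) * s.indicator 1 x ∂μ
      = ∫ x, s.indicator 1 x * (μ[X - μ[X|m₁] | m₂]) x ∂μ := by
        rw [integral_mul_condExp_of_stronglyMeasurable hm₂ hind
          (hresid_int.bdd_mul (hind.mono hm₂).aestronglyMeasurable hbound) hresid_int]
        simp_rw [mul_comm, Pi.sub_apply]
    _ = ∫ x, ((μ[X|m₂]) x - (μ[X|m₁]) x) * s.indicator 1 x ∂μ :=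
        integral_congr_ae (hresid.mono fun x hx => by simp only [hx, Pi.sub_apply, mul_comm])

lemma sq_integral_sub_condExp_mul_indicator_le [IsProbabilityMeasure μ] (hm₁₂ : m₁ ≤ m₂)
    (hm₂ : m₂ ≤ mΩ) {X : Ω → ℝ} (hX : MemLp X 2 μ) {s : Set Ω} (hs : MeasurableSet[m₂] s) :
    (∫ x, (X x - (μ[X|m₁]) x) * s.indicator 1 x ∂μ) ^ 2
      ≤ ∫ x, ((μ[X|m₂]) x) ^ 2 ∂μ - ∫ x, ((μ[X|m₁]) x) ^ 2 ∂μ := by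
  rw [integral_sub_condExp_mul_indicator hm₁₂ hm₂ (hX.integrable one_le_two) hs,
    ← integral_sq_condExp_sub_condExp hm₁₂ hm₂ hX]
  exact sq_integral_mul_indicator_le ((hX.condExp one_le_two).sub (hX.condExp one_le_two))
    (hm₂ s hs)

end Energy

/-- Lack of regularity implies energy increment. -/
theorem lack_of_regularity_energy_increment
    (Ω : Type) [mΩ : MeasurableSpace Ω] (μ : Measure Ω) [IsProbabilityMeasure μ]
    (I : Type) [Fintype I]
    (X : Ω → ℝ) (hX : MemLp X 2 μ)
    (Bmax B' : I → MeasurableSpace Ω)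
    (hBmax : ∀ i, Bmax i ≤ mΩ) (hB' : ∀ i, B' i ≤ Bmax i)
    (hB'fin : ∀ i, {s : Set Ω | MeasurableSet[B' i] s}.Finite)
    (A : I → Set Ω) (hA : ∀ i, MeasurableSet[Bmax i] (A i))
    (δ : ℝ) (hδ : 0 < δ)
    (hirreg :
      δ < |∫ x, (X x - (μ[X| ⨆ i, B' i]) x) * ∏ i, (A i).indicator (1 : Ω → ℝ) x ∂μ|) :
    -- complexity increment
    (∀ i, complexity (B' i ⊔ MeasurableSpace.generateFrom {A i})
        ≤ complexity (B' i) + 1) ∧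
    -- energy increment
    (∫ x, ((μ[X| ⨆ i, B' i]) x) ^ 2 ∂μ) + δ ^ 2
      ≤ ∫ x, ((μ[X| ⨆ i, B' i ⊔ MeasurableSpace.generateFrom {A i}]) x) ^ 2 ∂μ := by
  refine ⟨fun i => complexity_sup_generateFrom_singleton_le (hB'fin i) (A i), ?_⟩
  have hA' : ∀ i, MeasurableSpace.generateFrom {A i} ≤ Bmax i := fun i =>
    MeasurableSpace.generateFrom_le (by rintro t rfl; exact hA i)
  have hm₂ : (⨆ i, B' i ⊔ MeasurableSpace.generateFrom {A i}) ≤ mΩ :=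
    iSup_le fun i => sup_le ((hB' i).trans (hBmax i)) ((hA' i).trans (hBmax i))
  have hinter : MeasurableSet[⨆ i, B' i ⊔ MeasurableSpace.generateFrom {A i}] (⋂ i, A i) :=
    .iInter fun i => le_iSup (fun i => B' i ⊔ MeasurableSpace.generateFrom {A i}) i _ <|
      le_sup_right (a := B' i) _ (MeasurableSpace.measurableSet_generateFrom rfl)
  have hprod : ∀ x, ∏ i, (A i).indicator (1 : Ω → ℝ) x = (⋂ i, A i).indicator 1 x := fun x => by
    simp [prod_indicator_const_apply]
  simp only [hprod] at hirreg
  have hδsq := sq_lt_sq.2 ((abs_of_pos hδ).trans_lt hirreg)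
  linarith [sq_integral_sub_condExp_mul_indicator_le (iSup_mono fun i => le_sup_left) hm₂ hX hinter]
end

section
/- Relation between entropy and expectation (Lemma 4.5): Let X, Y, Y' be random variables on a probability space, each taking finitely many values, with Y ↦ Y' (Y' is determined by Y), and suppose X takes values in the interval [−1, 1]. Then E( |E(X | Y') − E(X | Y)| ) ≤ 2 · I(X : Y | Y')^{1/2}, where conditional expectations are taken with respect to the σ-algebras generated by Y' and Y respectively, and the conditional mutual information I(X : Y | Y') is computed with the natural logarithm. -/
open MeasureTheory

/-- Shannon entropy (in nats) of a random variable taking finitely many values: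
`H(X) = Σ_x P(X = x) log(1/P(X = x))`, with the convention `0·log(1/0) = 0`. -/
noncomputable def entNat {Ω S : Type*} [MeasurableSpace Ω] (μ : Measure Ω) (X : Ω → S) : ℝ :=
  ∑' s : S, (μ (X ⁻¹' {s})).toReal * Real.log (1 / (μ (X ⁻¹' {s})).toReal)

/-- Conditional entropy `H(X|Y) := H(X,Y) − H(Y)` (in nats). -/
noncomputable def condEntNat {Ω S T : Type*} [MeasurableSpace Ω] (μ : Measure Ω)
    (X : Ω → S) (Y : Ω → T) : ℝ :=
  entNat μ (fun ω => (X ω, Y ω)) - entNat μ Y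

/-- Conditional mutual information `I(X:Y|Z) := H(X|Z) − H(X|Y,Z)` (in nats). -/
noncomputable def condMINat {Ω S T U : Type*} [MeasurableSpace Ω] (μ : Measure Ω)
    (X : Ω → S) (Y : Ω → T) (Z : Ω → U) : ℝ :=
  condEntNat μ X Z - condEntNat μ X (fun ω => (Y ω, Z ω))

/-!
As `σ(Y') ≤ σ(Y)`, `Y' = f ∘ Y` for some `f`. On a fiber `{Y = t}` both conditional expectations
are constant: they are the means of `X` under `μ(· | Y = t)` and `μ(· | Y' = f t)`. Since
`|X| ≤ 1`, their difference is at most the `ℓ¹` distance between the laws of `X` under these two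
measures, hence by Pinsker's inequality at most `√(2 D_t)`, where `D_t` is the relative entropy
of the two laws. Expanding the entropies gives `I(X : Y | Y') = ∑_t P(Y = t) D_t`, so by
Cauchy–Schwarz `E|E(X|Y') - E(X|Y)| ≤ ∑_t P(Y = t) √(2 D_t) ≤ √(2 I) ≤ 2 √I`.
-/

open Real Set InformationTheory

lemma three_mul_sq_div_le_klFun {r : ℝ} (hr : 0 ≤ r) :
    3 * (r - 1) ^ 2 / (2 * (r + 2)) ≤ klFun r := by
  -- `3 (r - 1)² / (2 (r + 2)) = 3 (r - 4) / 2 + 27 / (2 (r + 2))` has second derivative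
  -- `27 / (r + 2)³ ≤ 1 / r = klFun'' r`, so the difference `g` is convex, with `g 1 = g' 1 = 0`.
  set g : ℝ → ℝ := fun r ↦ klFun r - 3 / 2 * (r - 4) - 27 / 2 * (r + 2)⁻¹
  set g' : ℝ → ℝ := fun r ↦ log r - 3 / 2 + 27 / 2 * ((r + 2) ^ 2)⁻¹
  have hg : ∀ r, 0 < r → HasDerivAt g (g' r) r := fun r hr ↦
    (((hasDerivAt_klFun hr.ne').sub (((hasDerivAt_id r).sub_const 4).const_mul _)).sub
      ((((hasDerivAt_id r).add_const 2).inv (by positivity)).const_mul _)).congr_deriv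
      (by simp only [g', id]; ring)
  have hg' : ∀ r, 0 < r → HasDerivAt g' (r⁻¹ - 27 * ((r + 2) ^ 3)⁻¹) r := by
    intro r hr
    have : r + 2 ≠ 0 := by positivity
    refine (((hasDerivAt_log hr.ne').sub_const _).add
      (((((hasDerivAt_id r).add_const 2).pow 2).inv (by simp [this])).const_mul _)).congr_deriv ?_
    simp only [id, Pi.pow_apply]
    field_simp
    ring
  have hconvex : ConvexOn ℝ (Ici 0) g := by
    refine convexOn_of_hasDerivWithinAt2_nonneg (f' := g')
      (f'' := fun x ↦ x⁻¹ - 27 * ((x + 2) ^ 3)⁻¹) (convex_Ici 0) ?_ ?_ ?_ ?_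
    · have := continuous_klFun
      exact ContinuousOn.sub (by fun_prop) <| continuousOn_const.mul <|
        ContinuousOn.inv₀ (by fun_prop) fun x hx ↦ by linarith [mem_Ici.1 hx]
    all_goals intro x hx; rw [interior_Ici] at hx
    · exact (hg x hx).hasDerivWithinAt
    · exact (hg' x hx).hasDerivWithinAt
    · have hx : 0 < x := hx
      rw [sub_nonneg, ← div_eq_mul_inv, inv_eq_one_div, div_le_div_iff₀ (by positivity) hx]
      nlinarith [sq_nonneg (x - 1)]
  have hmin : IsMinOn g (Ici 0) 1 := by
    refine hconvex.isMinOn_of_rightDeriv_eq_zero (by simp) ?_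
    rw [(hg 1 one_pos).hasDerivWithinAt.derivWithin (uniqueDiffWithinAt_Ioi 1)]
    norm_num [g']
  have key : 3 * (r - 1) ^ 2 / (2 * (r + 2)) = 3 / 2 * (r - 4) + 27 / 2 * (r + 2)⁻¹ := by
    field_simp
    ring
  have h := hmin (mem_Ici.2 hr)
  norm_num [g, klFun_one] at h
  linarith

lemma three_mul_sq_div_le_mul_log_div {a b : ℝ} (ha : 0 ≤ a) (hb : 0 ≤ b) (hab : b = 0 → a = 0) :
    3 * (a - b) ^ 2 / (2 * (a + 2 * b)) ≤ a * log (a / b) - a + b := by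
  rcases hb.eq_or_lt with rfl | hb
  · simp [hab rfl]
  have h := mul_le_mul_of_nonneg_left (three_mul_sq_div_le_klFun (div_nonneg ha hb.le)) hb.le
  have : a + 2 * b ≠ 0 := by positivity
  have e₁ : b * (3 * (a / b - 1) ^ 2 / (2 * (a / b + 2)))
      = 3 * (a - b) ^ 2 / (2 * (a + 2 * b)) := by
    field_simp
  have e₂ : b * klFun (a / b) = a * log (a / b) - a + b := by
    rw [klFun_apply]
    field_simp
    ring
  linarith

section Pinsker

variable {ι : Type*} (s : Finset ι) {a b : ι → ℝ}

lemma sum_three_mul_sq_div_le_sum_mul_log_div (ha : ∀ i, 0 ≤ a i) (hb : ∀ i, 0 ≤ b i)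
    (hab : ∀ i, b i = 0 → a i = 0) (hsum : ∑ i ∈ s, b i = ∑ i ∈ s, a i) :
    ∑ i ∈ s, 3 * (a i - b i) ^ 2 / (2 * (a i + 2 * b i)) ≤ ∑ i ∈ s, a i * log (a i / b i) := by
  calc _ ≤ ∑ i ∈ s, (a i * log (a i / b i) - a i + b i) :=
        Finset.sum_le_sum fun i _ ↦ three_mul_sq_div_le_mul_log_div (ha i) (hb i) (hab i)
    _ = _ := by simp only [Finset.sum_add_distrib, Finset.sum_sub_distrib, hsum, sub_add_cancel]

lemma sum_mul_log_div_nonneg (ha : ∀ i, 0 ≤ a i) (hb : ∀ i, 0 ≤ b i)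
    (hab : ∀ i, b i = 0 → a i = 0) (hsum : ∑ i ∈ s, b i = ∑ i ∈ s, a i) :
    0 ≤ ∑ i ∈ s, a i * log (a i / b i) :=
  (Finset.sum_nonneg fun i _ ↦ by have := ha i; have := hb i; positivity).trans
    (sum_three_mul_sq_div_le_sum_mul_log_div s ha hb hab hsum)

/-- Pinsker's inequality for finite measures of equal mass. -/
lemma sum_abs_sub_le_sqrt_mul_sqrt (ha : ∀ i, 0 ≤ a i) (hb : ∀ i, 0 ≤ b i)
    (hab : ∀ i, b i = 0 → a i = 0) (hsum : ∑ i ∈ s, b i = ∑ i ∈ s, a i) :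
    ∑ i ∈ s, |a i - b i| ≤ √(∑ i ∈ s, a i) * √(2 * ∑ i ∈ s, a i * log (a i / b i)) := by
  -- Cauchy–Schwarz with weights `2 (a + 2 b) / 3`, which sum to `2 ∑ a`.
  set u : ι → ℝ := fun i ↦ 2 * (a i + 2 * b i) / 3
  set v : ι → ℝ := fun i ↦ 3 * (a i - b i) ^ 2 / (2 * (a i + 2 * b i))
  have hu : ∀ i, 0 ≤ u i := fun i ↦ by have := ha i; have := hb i; positivity
  have hv : ∀ i, 0 ≤ v i := fun i ↦ by have := ha i; have := hb i; positivity
  have huv : ∀ i, |a i - b i| = √(u i) * √(v i) := fun i ↦ by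
    rw [← Real.sqrt_mul (hu i)]
    rcases (hb i).eq_or_lt with h | h
    · simp [u, v, ← h, hab i h.symm]
    · have : a i + 2 * b i ≠ 0 := by have := ha i; positivity
      rw [show u i * v i = (a i - b i) ^ 2 by simp only [u, v]; field_simp, Real.sqrt_sq_eq_abs]
  have hu_sum : ∑ i ∈ s, u i = 2 * ∑ i ∈ s, a i := by
    simp only [u, ← Finset.sum_div, ← Finset.mul_sum, Finset.sum_add_distrib, hsum]
    ring
  calc ∑ i ∈ s, |a i - b i| = ∑ i ∈ s, √(u i) * √(v i) := Finset.sum_congr rfl fun i _ ↦ huv i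
    _ ≤ √(∑ i ∈ s, u i) * √(∑ i ∈ s, v i) := Real.sum_sqrt_mul_sqrt_le s hu hv
    _ ≤ √(2 * ∑ i ∈ s, a i) * √(∑ i ∈ s, a i * log (a i / b i)) := by
      rw [hu_sum]
      exact mul_le_mul_of_nonneg_left (Real.sqrt_le_sqrt
        (sum_three_mul_sq_div_le_sum_mul_log_div s ha hb hab hsum)) (by positivity)
    _ = √(∑ i ∈ s, a i) * √(2 * ∑ i ∈ s, a i * log (a i / b i)) := by
      rw [Real.sqrt_mul zero_le_two, Real.sqrt_mul zero_le_two]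
      ring

end Pinsker

namespace MeasureTheory.SimpleFunc

variable {Ω T E : Type*} [MeasurableSpace Ω] {μ : Measure Ω} [NormedAddCommGroup E]

lemma integral_eq_sum_setIntegral_preimage [NormedSpace ℝ E] (Y : SimpleFunc Ω T) {g : Ω → E}
    (hg : Integrable g μ) :
    ∫ ω, g ω ∂μ = ∑ t ∈ Y.range, ∫ ω in Y ⁻¹' {t}, g ω ∂μ := by
  have hcover : ⋃ t ∈ Y.range, Y ⁻¹' {t} = univ := by ext; simp
  rw [← integral_biUnion_finset _ (fun t _ ↦ Y.measurableSet_fiber t)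
    (fun _ _ _ _ h ↦ (Set.disjoint_singleton.2 h).preimage Y) fun _ _ ↦ hg.integrableOn,
    hcover, setIntegral_univ]

lemma integrable_comp [IsFiniteMeasure μ] (Y : SimpleFunc Ω T) (φ : T → E) :
    Integrable (fun ω ↦ φ (Y ω)) μ :=
  (Y.map φ).integrable_of_isFiniteMeasure

lemma integral_comp_eq_sum [NormedSpace ℝ E] [CompleteSpace E] [IsFiniteMeasure μ]
    (Y : SimpleFunc Ω T) (φ : T → E) :
    ∫ ω, φ (Y ω) ∂μ = ∑ t ∈ Y.range, μ.real (Y ⁻¹' {t}) • φ t := by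
  rw [integral_eq_sum_setIntegral_preimage Y (Y.integrable_comp φ)]
  refine Finset.sum_congr rfl fun t _ ↦ ?_
  rw [setIntegral_congr_fun (Y.measurableSet_fiber t) fun ω (hω : Y ω = t) ↦ by rw [hω],
    setIntegral_const]

lemma sum_measureReal_preimage_singleton [IsFiniteMeasure μ] (Y : SimpleFunc Ω T) :
    ∑ t ∈ Y.range, μ.real (Y ⁻¹' {t}) = μ.real univ := by
  simpa using (Y.integral_comp_eq_sum (μ := μ) fun _ ↦ (1 : ℝ)).symm

lemma comap_le (Y : SimpleFunc Ω T) : MeasurableSpace.comap Y ⊤ ≤ ‹MeasurableSpace Ω› := by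
  rintro _ ⟨A, -, rfl⟩
  exact Y.measurableSet_preimage A

end MeasureTheory.SimpleFunc

lemma exists_eq_comp_of_comap_le {Ω T U : Type*} [Nonempty U] {Y : Ω → T} {Z : Ω → U}
    (h : MeasurableSpace.comap Z ⊤ ≤ MeasurableSpace.comap Y ⊤) : ∃ f : T → U, Z = f ∘ Y := by
  let _ : MeasurableSpace T := ⊤
  let _ : MeasurableSpace U := ⊤
  have : MeasurableSingletonClass U := ⟨fun _ ↦ trivial⟩
  exact (Function.factorsThrough_iff Z).1 (measurable_iff_comap_le.2 h).factorsThrough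

section ConditionalExpectation

variable {Ω T U : Type*} [mΩ : MeasurableSpace Ω] {μ : Measure Ω} [IsFiniteMeasure μ]
  {X : Ω → ℝ}

lemma condExp_comap_apply {Y : Ω → T} (hY : MeasurableSpace.comap Y ⊤ ≤ mΩ)
    (hX : Integrable X μ) {ω : Ω} (hω : μ (Y ⁻¹' {Y ω}) ≠ 0) :
    μ[X | MeasurableSpace.comap Y ⊤] ω = ⨍ a in Y ⁻¹' {Y ω}, X a ∂μ := by
  let _ : MeasurableSpace T := ⊤
  have hfiber : MeasurableSet[MeasurableSpace.comap Y ⊤] (Y ⁻¹' {Y ω}) := ⟨{Y ω}, trivial, rfl⟩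
  have hconst : EqOn (μ[X | MeasurableSpace.comap Y ⊤])
      (fun _ ↦ μ[X | MeasurableSpace.comap Y ⊤] ω) (Y ⁻¹' {Y ω}) := fun _ hω' ↦
    stronglyMeasurable_condExp.factorsThrough hω'
  have hμ : μ.real (Y ⁻¹' {Y ω}) ≠ 0 := (measureReal_ne_zero_iff (measure_ne_top _ _)).2 hω
  rw [setAverage_eq, ← setIntegral_condExp hY hX hfiber, setIntegral_congr_fun (hY _ hfiber) hconst,
    setIntegral_const, smul_eq_mul, smul_eq_mul, inv_mul_cancel_left₀ hμ]

lemma integral_abs_condExp_comp_sub_condExp (hX : Integrable X μ) (Y : SimpleFunc Ω T)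
    (f : T → U) :
    ∫ ω, |μ[X | MeasurableSpace.comap (f ∘ Y) ⊤] ω - μ[X | MeasurableSpace.comap Y ⊤] ω| ∂μ
      = ∑ t ∈ Y.range, μ.real (Y ⁻¹' {t})
          * |⨍ ω in (f ∘ Y) ⁻¹' {f t}, X ω ∂μ - ⨍ ω in Y ⁻¹' {t}, X ω ∂μ| := by
  have hfY : MeasurableSpace.comap (f ∘ Y) ⊤ ≤ mΩ := (Y.map f).comap_le
  rw [Y.integral_eq_sum_setIntegral_preimage (integrable_condExp.sub' integrable_condExp).abs]
  refine Finset.sum_congr rfl fun t _ ↦ ?_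
  rcases eq_or_ne (μ (Y ⁻¹' {t})) 0 with h | h
  · simp [Measure.restrict_eq_zero.2 h, measureReal_def, h]
  have h' : μ ((f ∘ Y) ⁻¹' {f t}) ≠ 0 := fun h' ↦
    h (measure_mono_null (fun ω (hω : Y ω = t) ↦ by simp [hω]) h')
  rw [← smul_eq_mul, ← setIntegral_const, setIntegral_congr_fun (Y.measurableSet_fiber t)]
  rintro ω (hω : Y ω = t)
  dsimp only
  rw [condExp_comap_apply hfY hX (by simpa [hω] using h'),
    condExp_comap_apply Y.comap_le hX (by simpa [hω] using h), Function.comp_apply, hω]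

end ConditionalExpectation

section Entropy

variable {Ω S T U : Type*} [MeasurableSpace Ω] {μ : Measure Ω} [IsFiniteMeasure μ]

/-- `log (ν (X = X ω) / ν Ω)`, kept as a difference so that expanding it needs no positivity. -/
noncomputable def logProb (ν : Measure Ω) (X : Ω → S) (ω : Ω) : ℝ :=
  log (ν.real (X ⁻¹' {X ω})) - log (ν.real univ)

lemma entNat_eq_neg_integral (W : SimpleFunc Ω S) :
    entNat μ W = -∫ ω, log (μ.real (W ⁻¹' {W ω})) ∂μ := by
  rw [W.integral_comp_eq_sum (fun w ↦ log (μ.real (W ⁻¹' {w}))), entNat,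
    tsum_eq_sum (s := W.range), ← Finset.sum_neg_distrib]
  · refine Finset.sum_congr rfl fun w _ ↦ ?_
    rw [one_div, log_inv, smul_eq_mul, measureReal_def, mul_neg]
  · intro w hw
    rw [(W.preimage_eq_empty_iff w).2 hw]
    simp

lemma condEntNat_eq_neg_integral (X : SimpleFunc Ω S) (Z : SimpleFunc Ω U) :
    condEntNat μ X Z = -∫ ω, logProb (μ.restrict (Z ⁻¹' {Z ω})) X ω ∂μ := by
  have hXZ : Integrable (fun ω ↦ log (μ.real (X ⁻¹' {X ω} ∩ Z ⁻¹' {Z ω}))) μ :=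
    (X.pair Z).integrable_comp fun p ↦ log (μ.real (X ⁻¹' {p.1} ∩ Z ⁻¹' {p.2}))
  have hZ : Integrable (fun ω ↦ log (μ.real (Z ⁻¹' {Z ω}))) μ :=
    Z.integrable_comp fun z ↦ log (μ.real (Z ⁻¹' {z}))
  rw [condEntNat, show (fun ω ↦ (X ω, Z ω)) = ⇑(X.pair Z) from rfl, entNat_eq_neg_integral,
    entNat_eq_neg_integral]
  simp only [logProb, measureReal_restrict_apply (X.measurableSet_fiber _),
    measureReal_restrict_apply_univ, SimpleFunc.pair_apply, SimpleFunc.pair_preimage_singleton]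
  rw [integral_sub hXZ hZ]
  ring

lemma integrable_logProb_restrict (X : SimpleFunc Ω S) (Z : SimpleFunc Ω U) :
    Integrable (fun ω ↦ logProb (μ.restrict (Z ⁻¹' {Z ω})) X ω) μ :=
  (X.pair Z).integrable_comp fun p ↦
    log ((μ.restrict (Z ⁻¹' {p.2})).real (X ⁻¹' {p.1})) - log ((μ.restrict (Z ⁻¹' {p.2})).real univ)

lemma condMINat_comp_eq_integral (X : SimpleFunc Ω S) (Y : SimpleFunc Ω T) (f : T → U) :
    condMINat μ X Y (f ∘ Y) = ∫ ω, (logProb (μ.restrict (Y ⁻¹' {Y ω})) X ω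
      - logProb (μ.restrict ((f ∘ Y) ⁻¹' {f (Y ω)})) X ω) ∂μ := by
  have hfiber : ∀ t, Y ⁻¹' {t} ∩ (f ∘ Y) ⁻¹' {f t} = Y ⁻¹' {t} := fun t ↦
    inter_eq_left.2 fun ω (hω : Y ω = t) ↦ by simp [hω]
  have hfY : Integrable (fun ω ↦ logProb (μ.restrict ((f ∘ Y) ⁻¹' {f (Y ω)})) X ω) μ :=
    integrable_logProb_restrict X (Y.map f)
  rw [condMINat, show (f ∘ Y : Ω → U) = ⇑(Y.map f) from rfl,
    show (fun ω ↦ (Y ω, (Y.map f) ω)) = ⇑(Y.pair (Y.map f)) from rfl,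
    condEntNat_eq_neg_integral, condEntNat_eq_neg_integral]
  simp only [SimpleFunc.pair_apply, SimpleFunc.pair_preimage_singleton, SimpleFunc.coe_map,
    Function.comp_apply, hfiber]
  rw [integral_sub (integrable_logProb_restrict X Y) hfY]
  ring

/-- `ν Ω` times the relative entropy of the law of `X` under `ν / ν Ω` with respect to its law
under `ν' / ν' Ω`. -/
noncomputable def klDivLaw (ν ν' : Measure Ω) (X : Ω → S) : ℝ :=
  ∫ ω, (logProb ν X ω - logProb ν' X ω) ∂ν

lemma condMINat_comp_eq_sum (X : SimpleFunc Ω S) (Y : SimpleFunc Ω T) (f : T → U) :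
    condMINat μ X Y (f ∘ Y)
      = ∑ t ∈ Y.range, klDivLaw (μ.restrict (Y ⁻¹' {t})) (μ.restrict ((f ∘ Y) ⁻¹' {f t})) X := by
  have hfY : Integrable (fun ω ↦ logProb (μ.restrict ((f ∘ Y) ⁻¹' {f (Y ω)})) X ω) μ :=
    integrable_logProb_restrict X (Y.map f)
  rw [condMINat_comp_eq_integral,
    Y.integral_eq_sum_setIntegral_preimage ((integrable_logProb_restrict X Y).sub' hfY)]
  refine Finset.sum_congr rfl fun t _ ↦ setIntegral_congr_fun (Y.measurableSet_fiber t) ?_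
  rintro ω (hω : Y ω = t)
  simp only [hω]

end Entropy

section KLDivLaw

variable {Ω S : Type*} [MeasurableSpace Ω] {ν ν' : Measure Ω} [IsFiniteMeasure ν]
  [IsFiniteMeasure ν']

lemma klDivLaw_eq_sum (hνν' : ν ≪ ν') (X : SimpleFunc Ω S) :
    klDivLaw ν ν' X = ∑ x ∈ X.range, ν.real (X ⁻¹' {x}) *
      log (ν.real (X ⁻¹' {x}) / (ν.real univ * ν'.real (X ⁻¹' {x}) / ν'.real univ)) := by
  refine (X.integral_comp_eq_sum (μ := ν) fun x ↦ (log (ν.real (X ⁻¹' {x})) - log (ν.real univ))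
    - (log (ν'.real (X ⁻¹' {x})) - log (ν'.real univ))).trans (Finset.sum_congr rfl fun x _ ↦ ?_)
  rcases eq_or_ne (ν.real (X ⁻¹' {x})) 0 with h | h
  · simp [h]
  have h' : ν'.real (X ⁻¹' {x}) ≠ 0 := fun h' ↦ h <|
    (measureReal_eq_zero_iff).2 <| hνν' <| (measureReal_eq_zero_iff).1 h'
  have hm : ν.real univ ≠ 0 := fun hm ↦ h <| measureReal_mono_null (subset_univ _) hm
  have hm' : ν'.real univ ≠ 0 := fun hm' ↦ h' <| measureReal_mono_null (subset_univ _) hm'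
  rw [smul_eq_mul, log_div h (by positivity), log_div (by positivity) hm', log_mul hm h']
  ring

lemma klDivLaw_nonneg_and_mul_abs_average_sub_le (hνν' : ν ≪ ν') (X : SimpleFunc Ω ℝ)
    (hX : ∀ ω, |X ω| ≤ 1) :
    0 ≤ klDivLaw ν ν' X ∧
      ν.real univ * |⨍ ω, X ω ∂ν' - ⨍ ω, X ω ∂ν| ≤ √(ν.real univ) * √(2 * klDivLaw ν ν' X) := by
  rcases eq_or_ne (ν.real univ) 0 with hm | hm
  · obtain rfl : ν = 0 := Measure.measure_univ_eq_zero.1 ((measureReal_eq_zero_iff).1 hm)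
    simp [klDivLaw]
  have hm' : ν'.real univ ≠ 0 := fun hm' ↦ hm <|
    (measureReal_eq_zero_iff).2 <| hνν' <| (measureReal_eq_zero_iff).1 hm'
  set a : ℝ → ℝ := fun x ↦ ν.real (X ⁻¹' {x})
  set b : ℝ → ℝ := fun x ↦ ν.real univ * ν'.real (X ⁻¹' {x}) / ν'.real univ
  have hb : ∀ x, 0 ≤ b x := fun x ↦ by positivity
  have hab : ∀ x, b x = 0 → a x = 0 := fun x hx ↦ by
    have : ν'.real (X ⁻¹' {x}) = 0 := by simpa [b, hm, hm'] using hx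
    exact (measureReal_eq_zero_iff).2 <| hνν' <| (measureReal_eq_zero_iff).1 this
  have ha_sum : ∑ x ∈ X.range, a x = ν.real univ := X.sum_measureReal_preimage_singleton
  have hb_sum : ∑ x ∈ X.range, b x = ∑ x ∈ X.range, a x := by
    rw [ha_sum, ← Finset.sum_div, ← Finset.mul_sum, X.sum_measureReal_preimage_singleton,
      mul_div_cancel_right₀ _ hm']
  have hmean : ν.real univ * (⨍ ω, X ω ∂ν' - ⨍ ω, X ω ∂ν) = ∑ x ∈ X.range, x * (b x - a x) := by
    have h := X.integral_comp_eq_sum (μ := ν) id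
    have h' := X.integral_comp_eq_sum (μ := ν') id
    simp only [id, smul_eq_mul] at h h'
    rw [average_eq, average_eq, smul_eq_mul, smul_eq_mul, h, h', mul_sub, mul_inv_cancel_left₀ hm,
      Finset.mul_sum, Finset.mul_sum, ← Finset.sum_sub_distrib]
    refine Finset.sum_congr rfl fun x _ ↦ ?_
    simp only [a, b]
    field_simp
  rw [klDivLaw_eq_sum hνν']
  refine ⟨sum_mul_log_div_nonneg _ (fun _ ↦ measureReal_nonneg) hb hab hb_sum, ?_⟩
  calc ν.real univ * |⨍ ω, X ω ∂ν' - ⨍ ω, X ω ∂ν|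
      = |∑ x ∈ X.range, x * (b x - a x)| := by
        rw [← hmean, abs_mul, abs_of_nonneg measureReal_nonneg]
    _ ≤ ∑ x ∈ X.range, |a x - b x| := by
      refine (Finset.abs_sum_le_sum_abs _ _).trans (Finset.sum_le_sum fun x hx ↦ ?_)
      obtain ⟨ω, rfl⟩ := SimpleFunc.mem_range.1 hx
      rw [abs_mul, abs_sub_comm]
      exact mul_le_of_le_one_left (abs_nonneg _) (hX ω)
    _ ≤ _ := (sum_abs_sub_le_sqrt_mul_sqrt _ (fun _ ↦ measureReal_nonneg) hb hab hb_sum).trans_eq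
      (by rw [ha_sum])

end KLDivLaw

theorem abs_condexp_sub_condexp_le_sqrt_condMI_general
    (Ω : Type) [mΩ : MeasurableSpace Ω] (μ : Measure Ω) [IsProbabilityMeasure μ]
    (T T' : Type) (X : Ω → ℝ) (Y : Ω → T) (Y' : Ω → T')
    (hXfin : (Set.range X).Finite) (hYfin : (Set.range Y).Finite)
    (hXmeas : MeasurableSpace.comap X ⊤ ≤ mΩ)
    (hYmeas : MeasurableSpace.comap Y ⊤ ≤ mΩ)
    (hdet : MeasurableSpace.comap Y' ⊤ ≤ MeasurableSpace.comap Y ⊤)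
    (hXbd : ∀ ω, X ω ∈ Set.Icc (-1 : ℝ) 1) :
    ∫ ω, |(μ[X| MeasurableSpace.comap Y' ⊤]) ω - (μ[X| MeasurableSpace.comap Y ⊤]) ω| ∂μ
      ≤ 2 * Real.sqrt (condMINat μ X Y Y') := by
  have : Nonempty T' := (nonempty_of_isProbabilityMeasure μ).map Y'
  obtain ⟨f, rfl⟩ := exists_eq_comp_of_comap_le hdet
  obtain ⟨X, rfl⟩ : ∃ Xₛ : SimpleFunc Ω ℝ, ⇑Xₛ = X :=
    ⟨⟨X, fun x ↦ hXmeas _ ⟨{x}, trivial, rfl⟩, hXfin⟩, rfl⟩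
  obtain ⟨Y, rfl⟩ : ∃ Yₛ : SimpleFunc Ω T, ⇑Yₛ = Y :=
    ⟨⟨Y, fun t ↦ hYmeas _ ⟨{t}, trivial, rfl⟩, hYfin⟩, rfl⟩
  set K : T → ℝ := fun t ↦ klDivLaw (μ.restrict (Y ⁻¹' {t})) (μ.restrict ((f ∘ Y) ⁻¹' {f t})) X
  have hfiber : ∀ t, 0 ≤ K t ∧ μ.real (Y ⁻¹' {t}) * |⨍ ω in (f ∘ Y) ⁻¹' {f t}, X ω ∂μ
      - ⨍ ω in Y ⁻¹' {t}, X ω ∂μ| ≤ √(μ.real (Y ⁻¹' {t})) * √(2 * K t) := fun t ↦ by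
    have hsub : Y ⁻¹' {t} ⊆ (f ∘ Y) ⁻¹' {f t} := fun ω (hω : Y ω = t) ↦ by simp [hω]
    simpa only [measureReal_restrict_apply_univ] using
      klDivLaw_nonneg_and_mul_abs_average_sub_le
        (Measure.absolutelyContinuous_of_le (Measure.restrict_mono_set μ hsub)) X
        fun ω ↦ abs_le.2 (hXbd ω)
  calc _ = ∑ t ∈ Y.range, μ.real (Y ⁻¹' {t}) * |⨍ ω in (f ∘ Y) ⁻¹' {f t}, X ω ∂μ
        - ⨍ ω in Y ⁻¹' {t}, X ω ∂μ| :=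
        integral_abs_condExp_comp_sub_condExp X.integrable_of_isFiniteMeasure Y f
    _ ≤ ∑ t ∈ Y.range, √(μ.real (Y ⁻¹' {t})) * √(2 * K t) :=
        Finset.sum_le_sum fun t _ ↦ (hfiber t).2
    _ ≤ √(∑ t ∈ Y.range, μ.real (Y ⁻¹' {t})) * √(∑ t ∈ Y.range, 2 * K t) :=
        Real.sum_sqrt_mul_sqrt_le _ (fun _ ↦ measureReal_nonneg) fun t ↦ by linarith [(hfiber t).1]
    _ = √2 * √(condMINat μ X Y (f ∘ Y)) := by
        rw [Y.sum_measureReal_preimage_singleton, probReal_univ, Real.sqrt_one, one_mul,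
          ← Finset.mul_sum, condMINat_comp_eq_sum, Real.sqrt_mul zero_le_two]
    _ ≤ 2 * √(condMINat μ X Y (f ∘ Y)) := by
        gcongr
        exact Real.sqrt_le_iff.2 ⟨zero_le_two, by norm_num⟩

/-- Relation between entropy and expectation: if `Y ↦ Y'` and `X` takes finitely many
values in `[-1,1]`, then `E(|E(X|Y') − E(X|Y)|) ≤ 2 I(X:Y|Y')^{1/2}`. -/
theorem abs_condexp_sub_condexp_le_sqrt_condMI
    (Ω : Type) [mΩ : MeasurableSpace Ω] (μ : Measure Ω) [IsProbabilityMeasure μ]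
    (T T' : Type) (X : Ω → ℝ) (Y : Ω → T) (Y' : Ω → T')
    (hXfin : (Set.range X).Finite) (hYfin : (Set.range Y).Finite)
    (hY'fin : (Set.range Y').Finite)
    (hXmeas : MeasurableSpace.comap X ⊤ ≤ mΩ)
    (hYmeas : MeasurableSpace.comap Y ⊤ ≤ mΩ)
    (hY'meas : MeasurableSpace.comap Y' ⊤ ≤ mΩ)
    (hdet : MeasurableSpace.comap Y' ⊤ ≤ MeasurableSpace.comap Y ⊤)
    (hXbd : ∀ ω, X ω ∈ Set.Icc (-1 : ℝ) 1) :
    ∫ ω, |(μ[X| MeasurableSpace.comap Y' ⊤]) ω - (μ[X| MeasurableSpace.comap Y ⊤]) ω| ∂μ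
      ≤ 2 * Real.sqrt (condMINat μ X Y Y') :=
  abs_condexp_sub_condexp_le_sqrt_condMI_general Ω (mΩ := mΩ) μ T T' X Y Y' hXfin hYfin hXmeas
    hYmeas hdet hXbd
end

section
/- Unconditional entropy–expectation bound (special case of Lemma 4.5): Let X, Y be random variables on a probability space, each taking finitely many values, with X taking values in [−1, 1]. Then E( |E(X) − E(X | Y)| ) ≤ 2 · I(X : Y)^{1/2}, where E(X | Y) is the conditional expectation of X with respect to the σ-algebra generated by Y and the mutual information I(X : Y) := H(X) − H(X | Y) is computed with the natural logarithm. -/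
/-!
Write `p`, `r` for the laws of `X`, `Y` and `j` for their joint law. On the fibre `{Y = t}` the
conditional expectation is constant, so `E|E X - E(X|Y)| = Σ_t |Σ_x x (p_x r_t - j_{x,t})|`, which
is at most the total variation `Σ_{x,t} |j_{x,t} - p_x r_t|` because `|x| ≤ 1`. The mutual
information is the Kullback–Leibler divergence of `j` from `p ⊗ r`, and the Pinsker-type bound
`|a - b| ≤ (√a + √b) · (a log (a/b) + b - a)^{1/2}` (from `log u ≤ u - 1` at `u = √(b/a)`),
summed with Cauchy–Schwarz and `Σ (√a + √b)² ≤ 2 Σ (a + b) = 4`, bounds the total variation by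
`2 √I(X:Y)`.
-/

open MeasureTheory

/-- Mutual information `I(X:Y) := H(X) − H(X|Y)` (in nats). -/
noncomputable def miNat {Ω S T : Type*} [MeasurableSpace Ω] (μ : Measure Ω)
    (X : Ω → S) (Y : Ω → T) : ℝ :=
  entNat μ X - condEntNat μ X Y

open Real Finset

/-- For `b > 0` this is `b * InformationTheory.klFun (a / b)`. -/
noncomputable def klSummand (a b : ℝ) : ℝ := a * log (a / b) + b - a

lemma sq_sqrt_sub_sqrt_le_klSummand {a b : ℝ} (ha : 0 ≤ a) (hb : 0 ≤ b) (hab : b = 0 → a = 0) :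
    (√a - √b) ^ 2 ≤ klSummand a b := by
  rcases ha.eq_or_lt with rfl | ha
  · simp [klSummand, Real.sq_sqrt hb]
  have hb : 0 < b := hb.lt_of_ne fun h => ha.ne' (hab h.symm)
  -- `log (a / b) = -2 log (√b / √a) ≥ 2 (1 - √b / √a)`
  have hlog : 2 * (1 - √b / √a) ≤ log (a / b) := by
    have := Real.log_le_sub_one_of_pos (div_pos (sqrt_pos.2 hb) (sqrt_pos.2 ha))
    rw [Real.log_div (sqrt_pos.2 hb).ne' (sqrt_pos.2 ha).ne', Real.log_sqrt hb.le,
      Real.log_sqrt ha.le] at this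
    rw [Real.log_div ha.ne' hb.ne']
    linarith
  have hmul : a * (2 * (1 - √b / √a)) = 2 * a - 2 * (√a * √b) := by
    have := sqrt_pos.2 ha
    field_simp
    linear_combination √b * mul_self_sqrt ha.le
  rw [sub_sq, Real.sq_sqrt ha.le, Real.sq_sqrt hb.le, klSummand]
  linarith [mul_le_mul_of_nonneg_left hlog ha.le]

lemma klSummand_nonneg {a b : ℝ} (ha : 0 ≤ a) (hb : 0 ≤ b) (hab : b = 0 → a = 0) :
    0 ≤ klSummand a b :=
  (sq_nonneg _).trans (sq_sqrt_sub_sqrt_le_klSummand ha hb hab)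

lemma abs_sub_le_mul_sqrt_klSummand {a b : ℝ} (ha : 0 ≤ a) (hb : 0 ≤ b) (hab : b = 0 → a = 0) :
    |a - b| ≤ (√a + √b) * √(klSummand a b) := by
  have hfactor : a - b = (√a - √b) * (√a + √b) := by
    linear_combination sq_sqrt hb - sq_sqrt ha
  have habs : |√a - √b| ≤ √(klSummand a b) := by
    rw [← sqrt_sq_eq_abs]
    exact sqrt_le_sqrt (sq_sqrt_sub_sqrt_le_klSummand ha hb hab)
  rw [hfactor, abs_mul, abs_of_nonneg (by positivity : 0 ≤ √a + √b), mul_comm]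
  exact mul_le_mul_of_nonneg_left habs (by positivity)

/-- A Pinsker-type inequality, with constant `2` in place of the optimal `√2`. -/
lemma sum_abs_sub_le_two_mul_sqrt_sum_klSummand {ι : Type*} (s : Finset ι) {a b : ι → ℝ}
    (ha : ∀ i ∈ s, 0 ≤ a i) (hb : ∀ i ∈ s, 0 ≤ b i) (hab : ∀ i ∈ s, b i = 0 → a i = 0)
    (ha1 : ∑ i ∈ s, a i = 1) (hb1 : ∑ i ∈ s, b i = 1) :
    ∑ i ∈ s, |a i - b i| ≤ 2 * √(∑ i ∈ s, klSummand (a i) (b i)) := by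
  have hsq : ∑ i ∈ s, (√(a i) + √(b i)) ^ 2 ≤ 2 ^ 2 := by
    calc ∑ i ∈ s, (√(a i) + √(b i)) ^ 2 ≤ ∑ i ∈ s, 2 * (a i + b i) := by
          refine sum_le_sum fun i hi => ?_
          nlinarith [sq_sqrt (ha i hi), sq_sqrt (hb i hi), sq_nonneg (√(a i) - √(b i))]
      _ = 2 ^ 2 := by rw [← mul_sum, sum_add_distrib, ha1, hb1]; norm_num
  calc ∑ i ∈ s, |a i - b i|
      ≤ ∑ i ∈ s, (√(a i) + √(b i)) * √(klSummand (a i) (b i)) :=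
        sum_le_sum fun i hi => abs_sub_le_mul_sqrt_klSummand (ha i hi) (hb i hi) (hab i hi)
    _ ≤ √(∑ i ∈ s, (√(a i) + √(b i)) ^ 2) * √(∑ i ∈ s, √(klSummand (a i) (b i)) ^ 2) :=
        sum_mul_le_sqrt_mul_sqrt _ _ _
    _ ≤ 2 * √(∑ i ∈ s, klSummand (a i) (b i)) := by
        rw [sum_congr rfl fun i hi => sq_sqrt (klSummand_nonneg (ha i hi) (hb i hi) (hab i hi))]
        gcongr
        exact sqrt_le_iff.2 ⟨zero_le_two, hsq⟩

section Marginals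

variable {α β : Type*} {s : Finset α} {t : Finset β} {j : α → β → ℝ} {p : α → ℝ} {r : β → ℝ}

lemma sum_marginal_eq_one (hp : ∀ x ∈ s, ∑ y ∈ t, j x y = p x)
    (hr : ∀ y ∈ t, ∑ x ∈ s, j x y = r y) (hp1 : ∑ x ∈ s, p x = 1) : ∑ y ∈ t, r y = 1 := by
  rw [← sum_congr rfl hr, sum_comm, sum_congr rfl hp, hp1]

lemma le_left_marginal (hj : ∀ x ∈ s, ∀ y ∈ t, 0 ≤ j x y) (hp : ∀ x ∈ s, ∑ y ∈ t, j x y = p x)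
    {x : α} {y : β} (hx : x ∈ s) (hy : y ∈ t) : j x y ≤ p x :=
  hp x hx ▸ single_le_sum (hj x hx) hy

lemma le_right_marginal (hj : ∀ x ∈ s, ∀ y ∈ t, 0 ≤ j x y) (hr : ∀ y ∈ t, ∑ x ∈ s, j x y = r y)
    {x : α} {y : β} (hx : x ∈ s) (hy : y ∈ t) : j x y ≤ r y :=
  hr y hy ▸ single_le_sum (fun x' hx' => hj x' hx' y hy) hx

lemma entropy_add_entropy_sub_entropy_eq_sum_klSummand (hj : ∀ x ∈ s, ∀ y ∈ t, 0 ≤ j x y)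
    (hp : ∀ x ∈ s, ∑ y ∈ t, j x y = p x) (hr : ∀ y ∈ t, ∑ x ∈ s, j x y = r y)
    (hp1 : ∑ x ∈ s, p x = 1) :
    ∑ x ∈ s, p x * log (1 / p x) + ∑ y ∈ t, r y * log (1 / r y)
        - ∑ x ∈ s, ∑ y ∈ t, j x y * log (1 / j x y)
      = ∑ x ∈ s, ∑ y ∈ t, klSummand (j x y) (p x * r y) := by
  have hterm : ∀ x ∈ s, ∀ y ∈ t, j x y * log (1 / p x) + j x y * log (1 / r y)
      - j x y * log (1 / j x y) = j x y * log (j x y / (p x * r y)) := by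
    intro x hx y hy
    rcases (hj x hx y hy).eq_or_lt with hj0 | hjpos
    · simp [← hj0]
    have hpx : p x ≠ 0 := (hjpos.trans_le (le_left_marginal hj hp hx hy)).ne'
    have hry : r y ≠ 0 := (hjpos.trans_le (le_right_marginal hj hr hx hy)).ne'
    simp only [one_div, log_inv, log_div hjpos.ne' (mul_ne_zero hpx hry), log_mul hpx hry]
    ring
  have hp_eq : ∑ x ∈ s, p x * log (1 / p x) = ∑ x ∈ s, ∑ y ∈ t, j x y * log (1 / p x) :=
    sum_congr rfl fun x hx => by rw [← sum_mul, hp x hx]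
  have hr_eq : ∑ y ∈ t, r y * log (1 / r y) = ∑ x ∈ s, ∑ y ∈ t, j x y * log (1 / r y) := by
    rw [sum_comm]; exact sum_congr rfl fun y hy => by rw [← sum_mul, hr y hy]
  have hprod : ∑ x ∈ s, ∑ y ∈ t, p x * r y = ∑ x ∈ s, ∑ y ∈ t, j x y := by
    rw [← sum_mul_sum, sum_marginal_eq_one hp hr hp1, mul_one, sum_congr rfl hp]
  simp only [klSummand, sum_add_distrib, sum_sub_distrib, hprod, hp_eq, hr_eq]
  rw [← sum_congr rfl fun x hx => sum_congr rfl (hterm x hx)]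
  simp only [sum_add_distrib, sum_sub_distrib]
  ring

lemma sum_abs_sum_mul_sub_le_two_mul_sqrt_sum_klSummand (w : α → ℝ) (hw : ∀ x ∈ s, |w x| ≤ 1)
    (hj : ∀ x ∈ s, ∀ y ∈ t, 0 ≤ j x y)
    (hp : ∀ x ∈ s, ∑ y ∈ t, j x y = p x) (hr : ∀ y ∈ t, ∑ x ∈ s, j x y = r y)
    (hp1 : ∑ x ∈ s, p x = 1) :
    ∑ y ∈ t, |∑ x ∈ s, w x * (p x * r y - j x y)|
      ≤ 2 * √(∑ x ∈ s, ∑ y ∈ t, klSummand (j x y) (p x * r y)) := by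
  calc ∑ y ∈ t, |∑ x ∈ s, w x * (p x * r y - j x y)|
      ≤ ∑ y ∈ t, ∑ x ∈ s, |j x y - p x * r y| := by
        refine sum_le_sum fun y _ => (abs_sum_le_sum_abs _ _).trans (sum_le_sum fun x hx => ?_)
        rw [abs_mul, abs_sub_comm]
        exact mul_le_of_le_one_left (abs_nonneg _) (hw x hx)
    _ = ∑ z ∈ s ×ˢ t, |j z.1 z.2 - p z.1 * r z.2| := by rw [sum_product, sum_comm]
    _ ≤ 2 * √(∑ z ∈ s ×ˢ t, klSummand (j z.1 z.2) (p z.1 * r z.2)) := by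
        refine sum_abs_sub_le_two_mul_sqrt_sum_klSummand _ ?_ ?_ ?_ ?_ ?_
        · rintro ⟨x, y⟩ hz
          exact hj x (mem_product.1 hz).1 y (mem_product.1 hz).2
        · rintro ⟨x, y⟩ hz
          obtain ⟨hx, hy⟩ := mem_product.1 hz
          have := hj x hx y hy
          exact mul_nonneg (this.trans (le_left_marginal hj hp hx hy))
            (this.trans (le_right_marginal hj hr hx hy))
        · rintro ⟨x, y⟩ hz hpr
          obtain ⟨hx, hy⟩ := mem_product.1 hz
          refine le_antisymm ?_ (hj x hx y hy)
          rcases mul_eq_zero.1 hpr with h | h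
          · exact h ▸ le_left_marginal hj hp hx hy
          · exact h ▸ le_right_marginal hj hr hx hy
        · rw [sum_product, ← hp1]
          exact sum_congr rfl hp
        · rw [sum_product, ← sum_mul_sum, hp1, sum_marginal_eq_one hp hr hp1, mul_one]
    _ = 2 * √(∑ x ∈ s, ∑ y ∈ t, klSummand (j x y) (p x * r y)) := by rw [sum_product]

end Marginals

section Measure

variable {Ω S T : Type*} [MeasurableSpace Ω] {μ : Measure Ω}

lemma entNat_eq_sum {X : Ω → S} {F : Finset S} (hF : ∀ ω, X ω ∈ F) :
    entNat μ X = ∑ x ∈ F, μ.real (X ⁻¹' {x}) * log (1 / μ.real (X ⁻¹' {x})) := by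
  refine tsum_eq_sum fun x hx => ?_
  rw [Set.preimage_singleton_eq_empty.2 fun ⟨ω, hω⟩ => hx (hω ▸ hF ω)]
  simp

lemma sum_measureReal_inter_preimage_singleton [IsFiniteMeasure μ] {Y : Ω → T} {F : Finset T}
    (hF : ∀ ω, Y ω ∈ F) (hY : ∀ t, MeasurableSet (Y ⁻¹' {t})) (s : Set Ω) :
    ∑ t ∈ F, μ.real (s ∩ Y ⁻¹' {t}) = μ.real s := by
  have hcover : Y ⁻¹' F = Set.univ := Set.eq_univ_of_forall hF
  have := sum_measureReal_preimage_singleton (μ := μ.restrict s) F fun t _ => hY t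
  simpa [measureReal_restrict_apply (hY _), Set.inter_comm, hcover] using this

lemma sum_measureReal_preimage_singleton_inter [IsFiniteMeasure μ] {X : Ω → S} {F : Finset S}
    (hF : ∀ ω, X ω ∈ F) (hX : ∀ x, MeasurableSet (X ⁻¹' {x})) (s : Set Ω) :
    ∑ x ∈ F, μ.real (X ⁻¹' {x} ∩ s) = μ.real s := by
  simpa only [Set.inter_comm] using sum_measureReal_inter_preimage_singleton hF hX s

lemma sum_measureReal_preimage_singleton_eq_one [IsProbabilityMeasure μ] {X : Ω → S}
    {F : Finset S} (hF : ∀ ω, X ω ∈ F) (hX : ∀ x, MeasurableSet (X ⁻¹' {x})) :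
    ∑ x ∈ F, μ.real (X ⁻¹' {x}) = 1 := by
  simpa using sum_measureReal_inter_preimage_singleton (μ := μ) hF hX Set.univ

lemma integral_eq_sum_setIntegral_preimage_singleton {Y : Ω → T} {F : Finset T}
    (hF : ∀ ω, Y ω ∈ F) (hY : ∀ t, MeasurableSet (Y ⁻¹' {t})) {f : Ω → ℝ}
    (hf : Integrable f μ) : ∫ ω, f ω ∂μ = ∑ t ∈ F, ∫ ω in Y ⁻¹' {t}, f ω ∂μ := by
  have hcover : Y ⁻¹' F = Set.univ := Set.eq_univ_of_forall hF
  rw [← integral_biUnion_finset F (fun t _ => hY t) (Set.pairwiseDisjoint_fiber Y F)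
    fun t _ => hf.integrableOn, Finset.set_biUnion_preimage_singleton, hcover, setIntegral_univ]

lemma integral_eq_sum_mul_measureReal {X : Ω → ℝ} {F : Finset ℝ}
    (hF : ∀ ω, X ω ∈ F) (hX : ∀ x, MeasurableSet (X ⁻¹' {x})) (hXi : Integrable X μ) :
    ∫ ω, X ω ∂μ = ∑ x ∈ F, x * μ.real (X ⁻¹' {x}) := by
  rw [integral_eq_sum_setIntegral_preimage_singleton hF hX hXi]
  refine sum_congr rfl fun x _ => ?_
  rw [setIntegral_congr_fun (hX x) fun ω hω => hω, setIntegral_const, smul_eq_mul, mul_comm]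

lemma setIntegral_eq_sum_mul_measureReal {X : Ω → ℝ} {F : Finset ℝ}
    (hF : ∀ ω, X ω ∈ F) (hX : ∀ x, MeasurableSet (X ⁻¹' {x})) (hXi : Integrable X μ) (s : Set Ω) :
    ∫ ω in s, X ω ∂μ = ∑ x ∈ F, x * μ.real (X ⁻¹' {x} ∩ s) := by
  rw [integral_eq_sum_mul_measureReal hF hX hXi.integrableOn]
  simp only [measureReal_restrict_apply (hX _)]

lemma setIntegral_abs_eq_abs_setIntegral {f : Ω → ℝ} {s : Set Ω} (hs : MeasurableSet s)
    (hf : (f '' s).Subsingleton) : ∫ ω in s, |f ω| ∂μ = |∫ ω in s, f ω ∂μ| := by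
  rcases s.eq_empty_or_nonempty with rfl | ⟨ω₀, hω₀⟩
  · simp
  have hconst : Set.EqOn f (fun _ => f ω₀) s := fun ω hω =>
    hf (Set.mem_image_of_mem f hω) (Set.mem_image_of_mem f hω₀)
  rw [setIntegral_congr_fun hs hconst,
    setIntegral_congr_fun hs fun ω hω => congrArg abs (hconst hω), setIntegral_const,
    setIntegral_const, smul_eq_mul, smul_eq_mul, abs_mul, abs_of_nonneg measureReal_nonneg]

lemma integral_abs_condExp_comap_eq_sum [IsFiniteMeasure μ] {Y : Ω → T} {F : Finset T}
    (hF : ∀ ω, Y ω ∈ F) (hm : MeasurableSpace.comap Y ⊤ ≤ ‹MeasurableSpace Ω›) {f : Ω → ℝ}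
    (hf : Integrable f μ) :
    ∫ ω, |μ[f|MeasurableSpace.comap Y ⊤] ω| ∂μ = ∑ t ∈ F, |∫ ω in Y ⁻¹' {t}, f ω ∂μ| := by
  have hfiber : ∀ t, MeasurableSet[MeasurableSpace.comap Y ⊤] (Y ⁻¹' {t}) :=
    fun t => ⟨{t}, trivial, rfl⟩
  have hfactor : (μ[f|MeasurableSpace.comap Y ⊤]).FactorsThrough Y :=
    stronglyMeasurable_condExp.factorsThrough (mY := ⊤)
  rw [integral_eq_sum_setIntegral_preimage_singleton hF (fun t => hm _ (hfiber t))
    integrable_condExp.abs]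
  refine sum_congr rfl fun t _ => ?_
  rw [setIntegral_abs_eq_abs_setIntegral (hm _ (hfiber t)), setIntegral_condExp hm hf (hfiber t)]
  rintro _ ⟨ω, hω, rfl⟩ _ ⟨ω', hω', rfl⟩
  exact hfactor (hω.trans hω'.symm)

lemma miNat_eq_sum_klSummand [IsProbabilityMeasure μ] {X : Ω → S} {Y : Ω → T}
    {sX : Finset S} {sY : Finset T} (hXs : ∀ ω, X ω ∈ sX) (hYs : ∀ ω, Y ω ∈ sY)
    (hX : ∀ x, MeasurableSet (X ⁻¹' {x})) (hY : ∀ t, MeasurableSet (Y ⁻¹' {t})) :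
    miNat μ X Y = ∑ x ∈ sX, ∑ t ∈ sY,
      klSummand (μ.real (X ⁻¹' {x} ∩ Y ⁻¹' {t})) (μ.real (X ⁻¹' {x}) * μ.real (Y ⁻¹' {t})) := by
  have hjoint : entNat μ (fun ω => (X ω, Y ω)) = ∑ x ∈ sX, ∑ t ∈ sY,
      μ.real (X ⁻¹' {x} ∩ Y ⁻¹' {t}) * log (1 / μ.real (X ⁻¹' {x} ∩ Y ⁻¹' {t})) := by
    rw [entNat_eq_sum (F := sX ×ˢ sY) fun ω => mem_product.2 ⟨hXs ω, hYs ω⟩, sum_product]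
    simp only [← Set.singleton_prod_singleton, Set.mk_preimage_prod]
  rw [← entropy_add_entropy_sub_entropy_eq_sum_klSummand (fun _ _ _ _ => measureReal_nonneg)
      (fun x _ => sum_measureReal_inter_preimage_singleton hYs hY _)
      (fun t _ => sum_measureReal_preimage_singleton_inter hXs hX _)
      (sum_measureReal_preimage_singleton_eq_one hXs hX),
    miNat, condEntNat, hjoint, entNat_eq_sum hXs, entNat_eq_sum hYs]
  ring

lemma integral_abs_integral_sub_condExp_comap_eq_sum [IsProbabilityMeasure μ] {X : Ω → ℝ}
    {Y : Ω → T} {sX : Finset ℝ} {sY : Finset T} (hXs : ∀ ω, X ω ∈ sX) (hYs : ∀ ω, Y ω ∈ sY)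
    (hX : ∀ x, MeasurableSet (X ⁻¹' {x})) (hm : MeasurableSpace.comap Y ⊤ ≤ ‹MeasurableSpace Ω›)
    (hXi : Integrable X μ) :
    ∫ ω, |(∫ x, X x ∂μ) - μ[X|MeasurableSpace.comap Y ⊤] ω| ∂μ
      = ∑ t ∈ sY, |∑ x ∈ sX,
          x * (μ.real (X ⁻¹' {x}) * μ.real (Y ⁻¹' {t}) - μ.real (X ⁻¹' {x} ∩ Y ⁻¹' {t}))| := by
  set c := ∫ x, X x ∂μ
  have hce : μ[(fun _ => c) - X|MeasurableSpace.comap Y ⊤]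
      =ᵐ[μ] fun ω => c - μ[X|MeasurableSpace.comap Y ⊤] ω := by
    filter_upwards [condExp_sub (integrable_const c) hXi (MeasurableSpace.comap Y ⊤)] with ω hω
    rw [hω, condExp_const hm, Pi.sub_apply]
  rw [← integral_congr_ae (hce.mono fun ω hω => congrArg abs hω),
    integral_abs_condExp_comap_eq_sum hYs hm ((integrable_const c).sub hXi)]
  refine sum_congr rfl fun t _ => congrArg abs ?_
  have hc_sum : c = ∑ x ∈ sX, x * μ.real (X ⁻¹' {x}) := integral_eq_sum_mul_measureReal hXs hX hXi
  rw [Pi.sub_def, integral_sub (integrable_const c).integrableOn hXi.integrableOn,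
    setIntegral_const, setIntegral_eq_sum_mul_measureReal hXs hX hXi, hc_sum, smul_eq_mul,
    mul_comm, sum_mul, ← sum_sub_distrib]
  exact sum_congr rfl fun x _ => by ring

end Measure

/-- Unconditional entropy–expectation bound: if `X` takes finitely many values in
`[-1,1]`, then `E(|E(X) − E(X|Y)|) ≤ 2 I(X:Y)^{1/2}`. -/
theorem abs_integral_sub_condexp_le_sqrt_MI
    (Ω : Type) [mΩ : MeasurableSpace Ω] (μ : Measure Ω) [IsProbabilityMeasure μ]
    (T : Type) (X : Ω → ℝ) (Y : Ω → T)
    (hXfin : (Set.range X).Finite) (hYfin : (Set.range Y).Finite)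
    (hXmeas : MeasurableSpace.comap X ⊤ ≤ mΩ)
    (hYmeas : MeasurableSpace.comap Y ⊤ ≤ mΩ)
    (hXbd : ∀ ω, X ω ∈ Set.Icc (-1 : ℝ) 1) :
    ∫ ω, |(∫ x, X x ∂μ) - (μ[X| MeasurableSpace.comap Y ⊤]) ω| ∂μ
      ≤ 2 * Real.sqrt (miNat μ X Y) := by
  have hXm : Measurable X := (measurable_iff_comap_le.2 hXmeas).mono le_rfl le_top
  have hX : ∀ x, MeasurableSet (X ⁻¹' {x}) := fun x => hXmeas _ ⟨{x}, trivial, rfl⟩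
  have hY : ∀ t, MeasurableSet (Y ⁻¹' {t}) := fun t => hYmeas _ ⟨{t}, trivial, rfl⟩
  have hXs : ∀ ω, X ω ∈ hXfin.toFinset := fun ω => hXfin.mem_toFinset.2 ⟨ω, rfl⟩
  have hYs : ∀ ω, Y ω ∈ hYfin.toFinset := fun ω => hYfin.mem_toFinset.2 ⟨ω, rfl⟩
  have hXi : Integrable X μ :=
    .of_bound hXm.aestronglyMeasurable 1 (ae_of_all _ fun ω => abs_le.2 (hXbd ω))
  have hw : ∀ x ∈ hXfin.toFinset, |x| ≤ 1 := fun x hx => by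
    obtain ⟨ω, rfl⟩ := hXfin.mem_toFinset.1 hx
    exact abs_le.2 (hXbd ω)
  rw [integral_abs_integral_sub_condExp_comap_eq_sum hXs hYs hX hYmeas hXi,
    miNat_eq_sum_klSummand hXs hYs hX hY]
  exact sum_abs_sum_mul_sub_le_two_mul_sqrt_sum_klSummand (fun x => x) hw
    (fun _ _ _ _ => measureReal_nonneg)
    (fun x _ => sum_measureReal_inter_preimage_singleton hYs hY _)
    (fun t _ => sum_measureReal_preimage_singleton_inter hXs hX _)
    (sum_measureReal_preimage_singleton_eq_one hXs hX)
end

section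
/- Regularity from coarse/fine conditional-expectation approximations (key deduction in the proof of Theorem 2.3): Let V₁, V₂ be finite nonempty sets, let Ω = V₁ × V₂ with the uniform probability measure, and let E ⊆ V₁ × V₂. Let B₁ ⊆ B'₁ be σ-algebras on Ω consisting of sets of the form A × V₂ (A ⊆ V₁), and B₂ ⊆ B'₂ σ-algebras consisting of sets of the form V₁ × A (A ⊆ V₂). Let ε > 0 and δ > 0, and let W₁ ⊆ V₁ and W₂ ⊆ V₂ be such that W₁ × W₂ is contained in a single atom of B₁ ∨ B₂. Suppose that (i) |E( (1_E − E(1_E | B'₁ ∨ B'₂)) · 1_{A₁ × A₂} )| ≤ δ for all A₁ ⊆ W₁, A₂ ⊆ W₂, and (ii) E( |E(1_E | B'₁ ∨ B'₂) − E(1_E | B₁ ∨ B₂)|² · 1_{W₁ × W₂} ) ≤ ε² · |W₁|·|W₂| / (|V₁|·|V₂|). Then, setting d := the constant value of E(1_E | B₁ ∨ B₂) on the atom containing W₁ × W₂, one has |E ∩ (A₁ × A₂)| = d·|A₁|·|A₂| + O(ε·|W₁|·|W₂|) + O(δ·|V₁|·|V₂|) for all A₁ ⊆ W₁, A₂ ⊆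 W₂, where the implied constants are absolute; in particular, if δ ≤ ε·|W₁|·|W₂|/(|V₁|·|V₂|), the induced bipartite graph (W₁, W₂, E ∩ (W₁ × W₂)) is ε-regular up to an absolute constant. -/
open MeasureTheory

/-- An atom of a σ-algebra: a minimal nonempty measurable set. -/
def IsAtomOf {Ω : Type*} (m : MeasurableSpace Ω) (a : Set Ω) : Prop :=
  MeasurableSet[m] a ∧ a.Nonempty ∧
    ∀ s : Set Ω, MeasurableSet[m] s → s ⊆ a → s = ∅ ∨ s = a

/-!
Since `E(1_E | B₁ ∨ B₂) = d` on `W₁ × W₂`, on `A₁ × A₂` the function `1_E - d` splits as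
`(1_E - E(1_E | B'₁ ∨ B'₂)) + (E(1_E | B'₁ ∨ B'₂) - E(1_E | B₁ ∨ B₂))`. Summed over `A₁ × A₂`, the
first part is at most `δ |V₁| |V₂|` by (i), and by Cauchy–Schwarz and (ii) the second is at most
`ε |W₁| |W₂|`. Comparing this estimate for `(A₁, A₂)` with the one for `(W₁, W₂)` eliminates `d`
and gives ε-regularity with constant 4.
-/

open Finset

theorem abs_sum_le_of_sum_sq_le {ι : Type*} {s t : Finset ι} (hst : s ⊆ t) {u : ι → ℝ}
    {ε : ℝ} (hε : 0 ≤ ε) (hu : ∑ i ∈ t, u i ^ 2 ≤ ε ^ 2 * #t) :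
    |∑ i ∈ s, u i| ≤ ε * #t := by
  refine abs_le_of_sq_le_sq ?_ (by positivity)
  have hcard : (#s : ℝ) ≤ #t := by exact_mod_cast card_le_card hst
  calc (∑ i ∈ s, u i) ^ 2 ≤ #s * ∑ i ∈ s, u i ^ 2 := sq_sum_le_card_mul_sum_sq
    _ ≤ #t * (ε ^ 2 * #t) := by
      gcongr
      exact (sum_le_sum_of_subset_of_nonneg hst fun i _ _ => sq_nonneg (u i)).trans hu
    _ = (ε * #t) ^ 2 := by ring

theorem abs_sum_sub_mul_card_le {ι : Type*} {s t : Finset ι} (hst : s ⊆ t) {f g h : ι → ℝ}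
    {d δ ε : ℝ} (hε : 0 ≤ ε) (hd : ∀ i ∈ t, h i = d) (hfg : |∑ i ∈ s, (f i - g i)| ≤ δ)
    (hgh : ∑ i ∈ t, (g i - h i) ^ 2 ≤ ε ^ 2 * #t) :
    |∑ i ∈ s, f i - d * #s| ≤ δ + ε * #t := by
  have hsplit : ∑ i ∈ s, f i - d * #s = ∑ i ∈ s, (f i - g i) + ∑ i ∈ s, (g i - h i) := by
    rw [← sum_add_distrib, sum_congr rfl fun i _ => sub_add_sub_cancel (f i) (g i) (h i),
      sum_sub_distrib, sum_congr rfl fun i hi => hd i (hst hi)]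
    simp [mul_comm]
  rw [hsplit]
  exact (abs_add_le _ _).trans (add_le_add hfg (abs_sum_le_of_sum_sq_le hst hε hgh))

theorem abs_sub_div_mul_le_of_abs_sub_mul_le {x y d a w η : ℝ} (ha : 0 ≤ a) (haw : a ≤ w)
    (hx : |x - d * a| ≤ η) (hy : |y - d * w| ≤ η) : |x - a / w * y| ≤ 2 * η := by
  have hη : 0 ≤ η := (abs_nonneg _).trans hx
  rcases ha.eq_or_lt with rfl | ha
  · simpa using hx.trans (by linarith)
  have hw := ha.trans_le haw
  have hsplit : x - a / w * y = (x - d * a) - a / w * (y - d * w) := by field_simp; ring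
  calc |x - a / w * y| ≤ |x - d * a| + |a / w * (y - d * w)| := by rw [hsplit]; exact abs_sub _ _
    _ = |x - d * a| + a / w * |y - d * w| := by rw [abs_mul, abs_of_nonneg (div_nonneg ha.le hw.le)]
    _ ≤ η + 1 * η := by gcongr; exact (div_le_one hw).2 haw
    _ = 2 * η := by ring

theorem sum_mul_indicator_one_eq_sum_toFinset {Ω : Type*} [Fintype Ω] (φ : Ω → ℝ) (s : Set Ω)
    [Fintype s] : ∑ x, φ x * s.indicator 1 x = ∑ x ∈ s.toFinset, φ x := by
  classical
  simp [Set.indicator_apply, ← sum_filter, Set.filter_mem_univ_eq_toFinset]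

theorem integral_mul_indicator_one_uniform {Ω : Type*} [Fintype Ω] [MeasurableSpace Ω]
    [MeasurableSingletonClass Ω] (φ : Ω → ℝ) (s : Set Ω) [Fintype s] :
    ∫ x, φ x * s.indicator 1 x ∂((Fintype.card Ω : ENNReal)⁻¹ • Measure.count) =
      (∑ x ∈ s.toFinset, φ x) / Fintype.card Ω := by
  rw [integral_smul_measure, integral_fintype Integrable.of_finite]
  simp only [count_real_singleton, one_smul, sum_mul_indicator_one_eq_sum_toFinset]
  simp [div_eq_inv_mul]

theorem sum_toFinset_indicator_one {α : Type*} (E s : Set α) [Fintype s] :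
    ∑ x ∈ s.toFinset, E.indicator (1 : α → ℝ) x = (E ∩ s).ncard := by
  classical
  simp only [Set.indicator_apply, Pi.one_apply, sum_boole]
  rw [← Set.ncard_coe_finset]
  congr 2
  ext; simp [and_comm]

theorem abs_ncard_inter_prod_sub_le {V₁ V₂ : Type*} [Fintype V₁] [Fintype V₂] [Nonempty V₁]
    [Nonempty V₂] [MeasurableSpace (V₁ × V₂)] [MeasurableSingletonClass (V₁ × V₂)]
    (E : Set (V₁ × V₂)) {g h : V₁ × V₂ → ℝ} {W₁ A₁ : Set V₁} {W₂ A₂ : Set V₂} (hA₁ : A₁ ⊆ W₁)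
    (hA₂ : A₂ ⊆ W₂) {d δ ε : ℝ} (hε : 0 ≤ ε) (hd : ∀ x ∈ W₁ ×ˢ W₂, h x = d)
    (hfine : |∫ x, (E.indicator 1 x - g x) * (A₁ ×ˢ A₂).indicator 1 x
      ∂((Fintype.card (V₁ × V₂) : ENNReal)⁻¹ • Measure.count)| ≤ δ)
    (hcoarse : ∫ x, (g x - h x) ^ 2 * (W₁ ×ˢ W₂).indicator 1 x
      ∂((Fintype.card (V₁ × V₂) : ENNReal)⁻¹ • Measure.count)
        ≤ ε ^ 2 * ((W₁.ncard : ℝ) * W₂.ncard) / ((Fintype.card V₁ : ℝ) * Fintype.card V₂)) :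
    |((E ∩ (A₁ ×ˢ A₂)).ncard : ℝ) - d * A₁.ncard * A₂.ncard|
      ≤ δ * ((Fintype.card V₁ : ℝ) * Fintype.card V₂) + ε * ((W₁.ncard : ℝ) * W₂.ncard) := by
  classical
  have hN : (0 : ℝ) < Fintype.card V₁ * Fintype.card V₂ := by positivity
  rw [integral_mul_indicator_one_uniform, Fintype.card_prod, Nat.cast_mul, abs_div,
    abs_of_pos hN, div_le_iff₀ hN] at hfine
  rw [integral_mul_indicator_one_uniform, Fintype.card_prod, Nat.cast_mul,
    div_le_div_iff_of_pos_right hN, ← Nat.cast_mul, ← Set.ncard_prod,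
    Set.ncard_eq_toFinset_card'] at hcoarse
  have hst : (A₁ ×ˢ A₂).toFinset ⊆ (W₁ ×ˢ W₂).toFinset :=
    Set.toFinset_subset_toFinset.2 (Set.prod_mono hA₁ hA₂)
  have := abs_sum_sub_mul_card_le hst hε (fun x hx => hd x (Set.mem_toFinset.1 hx)) hfine hcoarse
  rwa [sum_toFinset_indicator_one, ← Set.ncard_eq_toFinset_card', ← Set.ncard_eq_toFinset_card',
    Set.ncard_prod, Set.ncard_prod, Nat.cast_mul, Nat.cast_mul, ← mul_assoc] at this

/-- Regularity from coarse/fine conditional-expectation approximations: the key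
deduction of the graph-theoretic regularity lemma from the probabilistic one. -/
theorem regularity_from_coarse_fine_approx :
    ∃ C : ℝ, 0 < C ∧
      ∀ (V₁ V₂ : Type) [instF₁ : Fintype V₁] [instF₂ : Fintype V₂],
        Nonempty V₁ → Nonempty V₂ →
        ∀ [mΩ : MeasurableSpace (V₁ × V₂)], (∀ s : Set (V₁ × V₂), MeasurableSet s) →
        ∀ μ : Measure (V₁ × V₂),
          -- μ is the uniform probability measure on V₁ × V₂
          μ = (Fintype.card (V₁ × V₂) : ENNReal)⁻¹ • Measure.count →
        ∀ (E : Set (V₁ × V₂)) (B₁ B'₁ B₂ B'₂ : MeasurableSpace (V₁ × V₂)),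
          B₁ ≤ B'₁ → B₂ ≤ B'₂ →
          -- B'₁ (hence B₁) consists of sets of the form A × V₂
          (∀ s : Set (V₁ × V₂), MeasurableSet[B'₁] s →
            ∃ A : Set V₁, s = A ×ˢ (Set.univ : Set V₂)) →
          -- B'₂ (hence B₂) consists of sets of the form V₁ × A
          (∀ s : Set (V₁ × V₂), MeasurableSet[B'₂] s →
            ∃ A : Set V₂, s = (Set.univ : Set V₁) ×ˢ A) →
        ∀ ε δ : ℝ, 0 < ε → 0 < δ →
        ∀ (W₁ : Set V₁) (W₂ : Set V₂),
          -- W₁ × W₂ is contained in a single atom of B₁ ∨ B₂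
          (∃ a : Set (V₁ × V₂), IsAtomOf (B₁ ⊔ B₂) a ∧ W₁ ×ˢ W₂ ⊆ a) →
        ∀ d : ℝ,
          -- d is the (constant) value of E(1_E | B₁ ∨ B₂) on the atom containing W₁ × W₂
          (∀ x ∈ W₁ ×ˢ W₂, (μ[E.indicator (1 : V₁ × V₂ → ℝ)| B₁ ⊔ B₂]) x = d) →
          -- (i): the fine approximation is accurate to within δ on W₁ × W₂
          (∀ A₁ ⊆ W₁, ∀ A₂ ⊆ W₂,
            |∫ x, (E.indicator (1 : V₁ × V₂ → ℝ) x
                - (μ[E.indicator (1 : V₁ × V₂ → ℝ)| B'₁ ⊔ B'₂]) x)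
                * (A₁ ×ˢ A₂).indicator (1 : V₁ × V₂ → ℝ) x ∂μ| ≤ δ) →
          -- (ii): local L² closeness of coarse and fine approximations on W₁ × W₂
          (∫ x, ((μ[E.indicator (1 : V₁ × V₂ → ℝ)| B'₁ ⊔ B'₂]) x
                - (μ[E.indicator (1 : V₁ × V₂ → ℝ)| B₁ ⊔ B₂]) x) ^ 2
              * (W₁ ×ˢ W₂).indicator (1 : V₁ × V₂ → ℝ) x ∂μ
            ≤ ε ^ 2 * ((W₁.ncard : ℝ) * W₂.ncard)
              / ((Fintype.card V₁ : ℝ) * Fintype.card V₂)) →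
          -- conclusion: |E ∩ (A₁ × A₂)| = d·|A₁|·|A₂| + O(ε|W₁||W₂|) + O(δ|V₁||V₂|)
          ((∀ A₁ ⊆ W₁, ∀ A₂ ⊆ W₂,
            |((E ∩ (A₁ ×ˢ A₂)).ncard : ℝ) - d * A₁.ncard * A₂.ncard|
              ≤ C * (ε * W₁.ncard * W₂.ncard
                  + δ * (Fintype.card V₁ : ℝ) * Fintype.card V₂)) ∧
          -- in particular: ε-regularity of (W₁, W₂, E ∩ (W₁ × W₂)) up to C
          (δ ≤ ε * ((W₁.ncard : ℝ) * W₂.ncard)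
              / ((Fintype.card V₁ : ℝ) * Fintype.card V₂) →
            ∀ A₁ ⊆ W₁, ∀ A₂ ⊆ W₂,
              |((E ∩ (A₁ ×ˢ A₂)).ncard : ℝ)
                  - ((A₁.ncard : ℝ) * A₂.ncard) / ((W₁.ncard : ℝ) * W₂.ncard)
                    * (E ∩ (W₁ ×ˢ W₂)).ncard|
                ≤ C * ε * W₁.ncard * W₂.ncard)) := by
  refine ⟨4, by norm_num, ?_⟩
  intro V₁ V₂ _ _ _ _ mΩ hMeas μ hμ E B₁ B'₁ B₂ B'₂ _ _ _ _ ε δ hε hδ W₁ W₂ _ d hd hfine hcoarse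
  -- the σ-algebras `B₁, …, B'₂` are now local instances; make `mΩ` the most recent one again
  let _ := mΩ
  have : MeasurableSingletonClass (V₁ × V₂) := ⟨fun x => hMeas {x}⟩
  subst hμ
  have key : ∀ A₁ ⊆ W₁, ∀ A₂ ⊆ W₂, |((E ∩ (A₁ ×ˢ A₂)).ncard : ℝ) - d * A₁.ncard * A₂.ncard|
      ≤ δ * (Fintype.card V₁ * Fintype.card V₂) + ε * (W₁.ncard * W₂.ncard) :=
    fun A₁ hA₁ A₂ hA₂ =>
      abs_ncard_inter_prod_sub_le E hA₁ hA₂ hε.le hd (hfine A₁ hA₁ A₂ hA₂) hcoarse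
  refine ⟨fun A₁ hA₁ A₂ hA₂ => (key A₁ hA₁ A₂ hA₂).trans ?_, fun hδε A₁ hA₁ A₂ hA₂ => ?_⟩
  · have : 0 ≤ ε * W₁.ncard * W₂.ncard + δ * Fintype.card V₁ * Fintype.card V₂ := by positivity
    linarith
  have hδN : δ * (Fintype.card V₁ * Fintype.card V₂) ≤ ε * (W₁.ncard * W₂.ncard) :=
    (le_div_iff₀ (by positivity)).1 hδε
  have hA : (A₁.ncard : ℝ) * A₂.ncard ≤ W₁.ncard * W₂.ncard := by
    exact_mod_cast Nat.mul_le_mul (Set.ncard_le_ncard hA₁) (Set.ncard_le_ncard hA₂)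
  have := abs_sub_div_mul_le_of_abs_sub_mul_le (by positivity) hA
    (mul_assoc d _ _ ▸ key A₁ hA₁ A₂ hA₂) (mul_assoc d _ _ ▸ key W₁ le_rfl W₂ le_rfl)
  linarith
end
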